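/- arXiv:1706.05537 — 6 statements merged into one kernel-verified Lean document; each statement's English description precedes it below -/
import Mathlib

section
/- Let n be a positive integer. Let 𝒜 and ℬ be non-empty cross-intersecting families of subsets of [n] = {1, ..., n}, and suppose moreover that 𝒜 is intersecting. Let a_0, a_1, ..., a_n and b_0, b_1, ..., b_n be non-negative real numbers such that a_i + b_i ≥ a_{n-i} + b_{n-i} and a_{n-i} ≥ b_i for every integer i with 0 ≤ i ≤ n/2. Then Σ_{A ∈ 𝒜} a_{|A|} + Σ_{B ∈ ℬ} b_{|B|} ≤ Σ_{S ∈ 𝒮_n} a_{|S|} + Σ_{S ∈ 𝒮_n} b_{|S|}, where 𝒮_n = {S ⊆ [n] : 1 ∈ S}. -/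
/-!
Split both sides by set size and compare the levels `k` and `n - k` of `𝒜`, `ℬ` and the star
`𝒮ₙ` for each `k ≤ n / 2`. Erdős–Ko–Rado gives `|𝒜ₖ| ≤ |𝒮ₖ|`. For any cross-intersecting pair
`𝒞, 𝒟`, the `k`-sets of `𝒞` and the complements of the `(n - k)`-sets of `𝒟` are disjoint
families of `k`-subsets of `[n]`, so `|𝒞ₖ| + |𝒟ₙ₋ₖ| ≤ C(n, k) = |𝒮ₖ| + |𝒮ₙ₋ₖ|`; this applies to
`(𝒜, 𝒜)`, `(𝒜, ℬ)` and `(ℬ, 𝒜)`. The weight conditions make the deficit of levels `k` and `n - k`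
a nonnegative combination of these four inequalities.
-/

open Finset

section Star

variable {α : Type*} [DecidableEq α]

def starFamily (U : Finset α) (x : α) : Finset (Finset α) := U.powerset.filter (fun S => x ∈ S)

theorem starFamily_slice (U : Finset α) (x : α) (k : ℕ) :
    (starFamily U x) # k = (U.powersetCard k).filter (fun S => x ∈ S) := by
  ext S
  simp only [starFamily, mem_slice, mem_filter, mem_powerset, mem_powersetCard]
  tauto

theorem card_starFamily_slice {U : Finset α} {x : α} (hx : x ∈ U) {k : ℕ} (hk : 1 ≤ k) :
    #((starFamily U x) # k) = (#U - 1).choose (k - 1) := by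
  have := card_filter_powersetCard_subset {x} U k (singleton_subset_iff.2 hx) (by simpa using hk)
  simpa [starFamily_slice, singleton_subset_iff] using this

theorem card_starFamily_slice_add_card_starFamily_slice {U : Finset α} {x : α} (hx : x ∈ U)
    {k : ℕ} (hk : k ≤ #U) :
    #((starFamily U x) # k) + #((starFamily U x) # (#U - k)) = (#U).choose k := by
  have hcompl : #((starFamily U x) # (#U - k)) = #((U.powersetCard k).filter (fun S => x ∉ S)) := by
    rw [starFamily_slice]
    refine card_nbij' (U \ ·) (U \ ·) ?_ ?_ ?_ ?_
    · intro T hT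
      simp only [coe_filter, mem_powersetCard, Set.mem_ofPred_eq] at hT ⊢
      refine ⟨⟨sdiff_subset, ?_⟩, fun h => (mem_sdiff.1 h).2 hT.2⟩
      rw [card_sdiff_of_subset hT.1.1, hT.1.2]
      omega
    · intro S hS
      simp only [coe_filter, mem_powersetCard, Set.mem_ofPred_eq] at hS ⊢
      exact ⟨⟨sdiff_subset, by rw [card_sdiff_of_subset hS.1.1, hS.1.2]⟩, mem_sdiff.2 ⟨hx, hS.2⟩⟩
    · intro T hT
      exact Finset.sdiff_sdiff_eq_self (mem_powersetCard.1 (mem_filter.1 hT).1).1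
    · intro S hS
      exact Finset.sdiff_sdiff_eq_self (mem_powersetCard.1 (mem_filter.1 hS).1).1
  rw [hcompl, starFamily_slice, card_filter_add_card_filter_not, card_powersetCard]

theorem card_slice_add_card_slice_le_choose {U : Finset α} {𝒞 𝒟 : Finset (Finset α)}
    (h𝒞 : ∀ C ∈ 𝒞, C ⊆ U) (h𝒟 : ∀ D ∈ 𝒟, D ⊆ U) (hcross : ∀ C ∈ 𝒞, ∀ D ∈ 𝒟, (C ∩ D).Nonempty)
    {k : ℕ} (hk : k ≤ #U) :
    #(𝒞 # k) + #(𝒟 # (#U - k)) ≤ (#U).choose k := by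
  have hinj : Set.InjOn (U \ ·) (𝒟 # (#U - k) : Set (Finset α)) := fun D₁ h₁ D₂ h₂ h => by
    rw [← Finset.sdiff_sdiff_eq_self (h𝒟 D₁ (slice_subset h₁)),
      ← Finset.sdiff_sdiff_eq_self (h𝒟 D₂ (slice_subset h₂))]
    exact congrArg (U \ ·) h
  have hdisj : Disjoint (𝒞 # k) ((𝒟 # (#U - k)).image (U \ ·)) := by
    simp only [disjoint_left, mem_image, not_exists, not_and]
    intro C hC D hD hDC
    obtain ⟨y, hy⟩ := hcross C (slice_subset hC) D (slice_subset hD)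
    rw [← hDC, mem_inter, mem_sdiff] at hy
    exact hy.1.2 hy.2
  have hsub : 𝒞 # k ∪ (𝒟 # (#U - k)).image (U \ ·) ⊆ U.powersetCard k := by
    intro S hS
    rw [mem_powersetCard]
    rcases mem_union.1 hS with hS | hS
    · exact ⟨h𝒞 S (slice_subset hS), (mem_slice.1 hS).2⟩
    · obtain ⟨D, hD, rfl⟩ := mem_image.1 hS
      refine ⟨sdiff_subset, ?_⟩
      rw [card_sdiff_of_subset (h𝒟 D (slice_subset hD)), (mem_slice.1 hD).2]
      omega
  rw [← card_image_of_injOn hinj, ← card_union_of_disjoint hdisj, ← card_powersetCard]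
  exact card_le_card hsub

theorem erdos_ko_rado_of_forall_subset {U : Finset α} {𝒜 : Finset (Finset α)} {r : ℕ}
    (hU : ∀ A ∈ 𝒜, A ⊆ U) (h𝒜 : (𝒜 : Set (Finset α)).Intersecting)
    (hr : (𝒜 : Set (Finset α)).Sized r) (hrU : r ≤ #U / 2) :
    #𝒜 ≤ (#U - 1).choose (r - 1) := by
  set φ : Finset α → Finset (Fin #U) := fun A => (A.subtype (· ∈ U)).map U.equivFin.toEmbedding
  set ψ : Finset (Fin #U) → Finset α := fun B =>
    (B.map U.equivFin.symm.toEmbedding).map (Function.Embedding.subtype _)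
  have hψφ : Set.LeftInvOn ψ φ 𝒜 := fun A hA => by
    simp only [φ, ψ]
    rw [map_map U.equivFin.toEmbedding,
      Function.Embedding.equiv_toEmbedding_trans_symm_toEmbedding, map_refl,
      subtype_map_of_mem (hU A hA)]
  have hφ𝒜 : ((𝒜.image φ : Finset _) : Set (Finset (Fin #U))).Intersecting := by
    simp only [coe_image]
    rintro _ ⟨A, hA, rfl⟩ _ ⟨B, hB, rfl⟩
    rw [disjoint_map, ← disjoint_map (Function.Embedding.subtype _),
      subtype_map_of_mem (hU A hA), subtype_map_of_mem (hU B hB)]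
    exact h𝒜 hA hB
  have hφr : ((𝒜.image φ : Finset _) : Set (Finset (Fin #U))).Sized r := by
    simp only [coe_image]
    rintro _ ⟨A, hA, rfl⟩
    simp [φ, card_subtype, filter_true_of_mem (hU A hA), hr hA]
  rw [← card_image_of_injOn hψφ.injOn]
  exact erdos_ko_rado hφ𝒜 hφr hrU

theorem card_slice_le_card_starFamily_slice {U : Finset α} {x : α} (hx : x ∈ U)
    {𝒜 : Finset (Finset α)} (hU : ∀ A ∈ 𝒜, A ⊆ U) (h𝒜 : (𝒜 : Set (Finset α)).Intersecting)
    {k : ℕ} (hk : 2 * k ≤ #U) :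
    #(𝒜 # k) ≤ #((starFamily U x) # k) := by
  rcases Nat.eq_zero_or_pos k with rfl | hk0
  · have : 𝒜 # 0 = ∅ := eq_empty_of_forall_notMem fun A hA => by
      obtain ⟨hA, hA0⟩ := mem_slice.1 hA
      exact h𝒜.bot_notMem (by rwa [card_eq_zero.1 hA0] at hA)
    simp [this]
  · rw [card_starFamily_slice hx hk0]
    exact erdos_ko_rado_of_forall_subset (fun A hA => hU A (slice_subset hA))
      (h𝒜.mono (coe_subset.2 slice_subset)) sized_slice (by omega)

end Star

theorem sum_card_eq_sum_range_card_slice {α M : Type*} [AddCommMonoid M] {U : Finset α}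
    {𝒞 : Finset (Finset α)} (hU : ∀ C ∈ 𝒞, C ⊆ U) (w : ℕ → M) :
    ∑ C ∈ 𝒞, w #C = ∑ k ∈ range (#U + 1), #(𝒞 # k) • w k := by
  rw [← sum_fiberwise_of_maps_to (g := card) fun C hC =>
    mem_range.2 (Nat.lt_succ_of_le (card_le_card (hU C hC)))]
  refine sum_congr rfl fun k _ => ?_
  rw [sum_congr rfl fun C hC => by rw [(mem_filter.1 hC).2], sum_const]
  rfl

theorem sum_range_le_sum_range_of_add_reflect_le {M : Type*} [AddCommMonoid M] [LinearOrder M]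
    [IsOrderedCancelAddMonoid M] {n : ℕ} {f g : ℕ → M}
    (h : ∀ k, 2 * k ≤ n → f k + f (n - k) ≤ g k + g (n - k)) :
    ∑ k ∈ range (n + 1), f k ≤ ∑ k ∈ range (n + 1), g k := by
  have hreflect : ∀ F : ℕ → M, ∑ k ∈ range (n + 1), F (n - k) = ∑ k ∈ range (n + 1), F k := by
    intro F
    simpa using sum_range_reflect F (n + 1)
  have hdouble : ∑ k ∈ range (n + 1), f k + ∑ k ∈ range (n + 1), f k ≤
      ∑ k ∈ range (n + 1), g k + ∑ k ∈ range (n + 1), g k := by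
    nth_rw 2 [← hreflect f]
    nth_rw 2 [← hreflect g]
    rw [← sum_add_distrib, ← sum_add_distrib]
    refine sum_le_sum fun k hk => ?_
    rcases le_or_gt (2 * k) n with hkn | hkn
    · exact h k hkn
    · have := h (n - k) (by omega)
      rwa [Nat.sub_sub_self (Nat.lt_succ_iff.1 (mem_range.1 hk)), add_comm (f _),
        add_comm (g _)] at this
  exact le_of_not_gt fun hlt => (add_lt_add hlt hlt).not_ge hdouble

theorem weighted_level_pair_le {x x' y y' s s' a a' b b' : ℝ}
    (hx : x ≤ s) (hxx' : x + x' ≤ s + s') (hxy' : x + y' ≤ s + s') (hyx' : y + x' ≤ s + s')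
    (hb : 0 ≤ b) (hb' : 0 ≤ b') (hab : a' + b' ≤ a + b) (hba : b ≤ a') :
    x * a + y * b + (x' * a' + y' * b') ≤ s * a + s * b + (s' * a' + s' * b') := by
  linear_combination mul_le_mul_of_nonneg_left hx (sub_nonneg.2 hab) +
    mul_le_mul_of_nonneg_left hxy' hb' + mul_le_mul_of_nonneg_left hyx' hb +
    mul_le_mul_of_nonneg_left hxx' (sub_nonneg.2 hba)

theorem weighted_cross_intersecting_general
    (n : ℕ) (hn : 1 ≤ n)
    (𝒜 ℬ : Finset (Finset ℕ))
    (h𝒜sub : ∀ A ∈ 𝒜, A ⊆ Finset.Icc 1 n)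
    (hℬsub : ∀ B ∈ ℬ, B ⊆ Finset.Icc 1 n)
    (hcross : ∀ A ∈ 𝒜, ∀ B ∈ ℬ, (A ∩ B).Nonempty)
    (hint : ∀ A ∈ 𝒜, ∀ A' ∈ 𝒜, (A ∩ A').Nonempty)
    (a b : ℕ → ℝ)
    (hb : ∀ i ≤ n, 0 ≤ b i)
    (hab : ∀ i, 2 * i ≤ n → a (n - i) + b (n - i) ≤ a i + b i)
    (hba : ∀ i, 2 * i ≤ n → b i ≤ a (n - i)) :
    ∑ A ∈ 𝒜, a A.card + ∑ B ∈ ℬ, b B.card ≤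
      ∑ S ∈ (Finset.Icc 1 n).powerset.filter (fun S => 1 ∈ S), a S.card +
        ∑ S ∈ (Finset.Icc 1 n).powerset.filter (fun S => 1 ∈ S), b S.card := by
  set U := Icc 1 n
  have hU : #U = n := by simp [U]
  have h1U : 1 ∈ U := by simpa [U] using hn
  have h𝒮sub : ∀ S ∈ starFamily U 1, S ⊆ U := fun S hS => mem_powerset.1 (mem_filter.1 hS).1
  have h𝒜 : (𝒜 : Set (Finset ℕ)).Intersecting := fun A hA A' hA' =>
    not_disjoint_iff_nonempty_inter.2 (hint A hA A' hA')
  have hcross_symm : ∀ B ∈ ℬ, ∀ A ∈ 𝒜, (B ∩ A).Nonempty := fun B hB A hA =>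
    inter_comm A B ▸ hcross A hA B hB
  change _ ≤ ∑ S ∈ starFamily U 1, a #S + ∑ S ∈ starFamily U 1, b #S
  simp only [sum_card_eq_sum_range_card_slice h𝒜sub, sum_card_eq_sum_range_card_slice hℬsub,
    sum_card_eq_sum_range_card_slice h𝒮sub, hU, nsmul_eq_mul, ← sum_add_distrib]
  refine sum_range_le_sum_range_of_add_reflect_le fun k hk => ?_
  have hlevels := card_starFamily_slice_add_card_starFamily_slice h1U (k := k) (by omega)
  have hcount {𝒞 𝒟 : Finset (Finset ℕ)} (h𝒞 : ∀ C ∈ 𝒞, C ⊆ U) (h𝒟 : ∀ D ∈ 𝒟, D ⊆ U)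
      (h : ∀ C ∈ 𝒞, ∀ D ∈ 𝒟, (C ∩ D).Nonempty) :
      (#(𝒞 # k) + #(𝒟 # (n - k)) : ℝ) ≤
        #((starFamily U 1) # k) + #((starFamily U 1) # (n - k)) := by
    have := card_slice_add_card_slice_le_choose h𝒞 h𝒟 h (k := k) (by omega)
    rw [← hlevels, hU] at this
    exact_mod_cast this
  exact weighted_level_pair_le
    (by exact_mod_cast card_slice_le_card_starFamily_slice h1U h𝒜sub h𝒜 (hU ▸ hk))
    (hcount h𝒜sub h𝒜sub hint) (hcount h𝒜sub hℬsub hcross) (hcount hℬsub h𝒜sub hcross_symm)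
    (hb k (by omega)) (hb (n - k) (by omega)) (hab k hk) (hba k hk)

/-- **Theorem (Borg).** If `𝒜` and `ℬ` are non-empty cross-intersecting families of
subsets of `[n] = {1, …, n}`, `𝒜` is intersecting, and `a₀, …, aₙ, b₀, …, bₙ` are
non-negative reals with `aᵢ + bᵢ ≥ a_{n-i} + b_{n-i}` and `a_{n-i} ≥ bᵢ` for each
`i ≤ n/2`, then
`∑_{A ∈ 𝒜} a_{|A|} + ∑_{B ∈ ℬ} b_{|B|} ≤ ∑_{S ∈ 𝒮ₙ} a_{|S|} + ∑_{S ∈ 𝒮ₙ} b_{|S|}`,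
where `𝒮ₙ = {S ⊆ [n] : 1 ∈ S}`. -/
theorem weighted_cross_intersecting
    (n : ℕ) (hn : 1 ≤ n)
    (𝒜 ℬ : Finset (Finset ℕ))
    (h𝒜sub : ∀ A ∈ 𝒜, A ⊆ Finset.Icc 1 n)
    (hℬsub : ∀ B ∈ ℬ, B ⊆ Finset.Icc 1 n)
    (h𝒜ne : 𝒜.Nonempty) (hℬne : ℬ.Nonempty)
    (hcross : ∀ A ∈ 𝒜, ∀ B ∈ ℬ, (A ∩ B).Nonempty)
    (hint : ∀ A ∈ 𝒜, ∀ A' ∈ 𝒜, (A ∩ A').Nonempty)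
    (a b : ℕ → ℝ)
    (ha : ∀ i ≤ n, 0 ≤ a i) (hb : ∀ i ≤ n, 0 ≤ b i)
    (hab : ∀ i, 2 * i ≤ n → a (n - i) + b (n - i) ≤ a i + b i)
    (hba : ∀ i, 2 * i ≤ n → b i ≤ a (n - i)) :
    ∑ A ∈ 𝒜, a A.card + ∑ B ∈ ℬ, b B.card ≤
      ∑ S ∈ (Finset.Icc 1 n).powerset.filter (fun S => 1 ∈ S), a S.card +
        ∑ S ∈ (Finset.Icc 1 n).powerset.filter (fun S => 1 ∈ S), b S.card :=
  weighted_cross_intersecting_general n hn 𝒜 ℬ h𝒜sub hℬsub hcross hint a b hb hab hba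
end

section
/- Let n and r be positive integers with n ≥ 2r − 1, and let T_n be the depth-two claw with n leaves: the graph with vertex set {x_0} ∪ {x_1, ..., x_n} ∪ {y_1, ..., y_n} (2n+1 distinct vertices) and edge set {x_0 y_i : i ∈ [n]} ∪ {x_i y_i : i ∈ [n]}. Then every intersecting family of r-element independent sets of T_n has size at most the number of r-element independent sets of T_n that contain the vertex x_1. -/
/-- The depth-two claw `Tₙ`: vertices are encoded as pairs of naturals, with
`x₀ = (0,0)`, `xᵢ = (i,1)` and `yᵢ = (i,2)` for `i ∈ [n]`; the edges are
`x₀yᵢ` and `xᵢyᵢ` for `i ∈ [n]`. -/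
def depthTwoClaw (n : ℕ) : SimpleGraph (ℕ × ℕ) :=
  SimpleGraph.fromEdgeSet
    {e | ∃ i ∈ Finset.Icc 1 n, e = s(((0 : ℕ), (0 : ℕ)), (i, 2)) ∨ e = s((i, 1), (i, 2))}

/-- The vertex set of the depth-two claw `Tₙ`. -/
def depthTwoClawVerts (n : ℕ) : Finset (ℕ × ℕ) :=
  insert ((0 : ℕ), (0 : ℕ)) ((Finset.Icc 1 n) ×ˢ ({1, 2} : Finset ℕ))

open Classical in
/-- The family of `r`-element independent sets of the depth-two claw `Tₙ`. -/
noncomputable def depthTwoClawIndep (n r : ℕ) : Finset (Finset (ℕ × ℕ)) :=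
  (depthTwoClawVerts n).powerset.filter
    (fun I => I.card = r ∧ ∀ u ∈ I, ∀ v ∈ I, ¬ (depthTwoClaw n).Adj u v)

/-!
Replacing `yᵢ` by `xᵢ` in members of the family (a UV-compression) keeps it intersecting; once no
such replacement changes the family, any two members share a vertex that is not a `y`-vertex.
Recording only the indices of the `x`-vertices, with `0` for `x₀`, then gives an intersecting
family of subsets of `{0, …, n}` in which an index set `V` stands for at most `weight n r V`
members. The matching weighted Erdős–Ko–Rado bound is proved by induction on `n`: at `n = 2r - 1`
it follows from the Erdős–Ko–Rado theorem level by level, and from `n` to `n + 1` by compressing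
`n + 1` into `[n]` and splitting the family along `n + 1`. The bound is exactly the size of the
star of `x₁`.
-/

open Finset
open scoped FinsetFamily

namespace UV

section GeneralizedBooleanAlgebra

variable {α : Type*} [GeneralizedBooleanAlgebra α] [DecidableRel (@Disjoint α _ _)]
  [DecidableLE α] [DecidableEq α] {s : Finset α} {u v a : α}

theorem IsCompressed.compress_mem (h : IsCompressed u v s) (ha : a ∈ s) : compress u v a ∈ s :=
  h.eq ▸ compress_mem_compression ha

theorem forall_mem_compression {p : α → Prop} (hs : ∀ a ∈ s, p a)
    (hc : ∀ a ∈ s, p (compress u v a)) : ∀ a ∈ 𝓒 u v s, p a := by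
  intro a ha
  obtain ⟨ha, -⟩ | ⟨-, b, hb, rfl⟩ := mem_compression.1 ha
  exacts [hs a ha, hc b hb]

theorem sum_compression {β : Type*} [AddCommMonoid β] (g : α → β) :
    ∑ a ∈ 𝓒 u v s, g a = ∑ a ∈ s, g (if compress u v a ∈ s then a else compress u v a) := by
  rw [compression, sum_union compress_disjoint, filter_image,
    sum_image fun _ ha _ hb h ↦ compress_injOn ha hb h, ← sum_filter_add_sum_filter_not s
      (fun a ↦ compress u v a ∈ s)]
  congr 1 <;> refine sum_congr rfl fun a ha ↦ ?_ <;> simp_all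

theorem sum_compression_of_forall {β : Type*} [AddCommMonoid β] {g : α → β}
    (hg : ∀ a ∈ s, g (compress u v a) = g a) : ∑ a ∈ 𝓒 u v s, g a = ∑ a ∈ s, g a := by
  rw [sum_compression]
  refine sum_congr rfl fun a ha ↦ ?_
  split_ifs
  exacts [rfl, hg a ha]

theorem sum_compression_lt {g : α → ℕ} (hg : ∀ a, compress u v a ≠ a → g (compress u v a) < g a)
    (h : ¬IsCompressed u v s) : ∑ a ∈ 𝓒 u v s, g a < ∑ a ∈ s, g a := by
  rw [sum_compression]
  have hle : ∀ a ∈ s, g (if compress u v a ∈ s then a else compress u v a) ≤ g a := by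
    intro a ha
    split_ifs with h'
    · rfl
    · exact (hg a fun h'' ↦ h' (by rwa [h''])).le
  obtain ⟨a, ha, hlt⟩ : ∃ a ∈ s, compress u v a ∉ s := by
    by_contra! hs
    refine h ?_
    rw [IsCompressed, compression, filter_true_of_mem hs, filter_image, filter_false_of_mem
      fun a ha h ↦ h (hs a ha), image_empty, union_empty]
  refine sum_lt_sum hle ⟨a, ha, ?_⟩
  rw [if_neg hlt]
  exact hg a fun h' ↦ hlt (by rwa [h'])

theorem exists_isCompressed {ι : Type*} {S : Set ι} (x y : ι → α) (P : Finset α → Prop)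
    (g : α → ℕ) (hg : ∀ i ∈ S, ∀ a, compress (x i) (y i) a ≠ a → g (compress (x i) (y i) a) < g a)
    (hP : ∀ i ∈ S, ∀ s, P s → P (𝓒 (x i) (y i) s)) (hs : P s) :
    ∃ t, P t ∧ ∀ i ∈ S, IsCompressed (x i) (y i) t := by
  induction hm : ∑ a ∈ s, g a using Nat.strong_induction_on generalizing s with
  | _ m ih =>
    by_cases hc : ∀ i ∈ S, IsCompressed (x i) (y i) s
    · exact ⟨s, hs, hc⟩
    push Not at hc
    obtain ⟨i, hi, hc⟩ := hc
    exact ih _ (hm ▸ sum_compression_lt (hg i hi) hc) (hP i hi s hs) rfl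

end GeneralizedBooleanAlgebra

section Finset

variable {α : Type*} [DecidableEq α] {𝒜 : Finset (Finset α)} {a b x : α} {A B : Finset α}

theorem compress_singleton (a b : α) (A : Finset α) :
    compress {a} {b} A = if a ∉ A ∧ b ∈ A then insert a (A.erase b) else A := by
  unfold compress
  simp only [disjoint_singleton_left, singleton_subset_iff]
  split_ifs with h
  · rw [sup_eq_union, union_singleton, sdiff_singleton_eq_erase,
      erase_insert_of_ne fun hab : a = b ↦ h.1 (hab ▸ h.2)]
  · rfl

theorem compress_singleton_of_ne (h : compress {a} {b} A ≠ A) :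
    a ∉ A ∧ b ∈ A ∧ compress {a} {b} A = insert a (A.erase b) := by
  rw [compress_singleton] at h ⊢
  split_ifs at h ⊢ with hab
  exacts [⟨hab.1, hab.2, rfl⟩, absurd rfl h]

theorem mem_compress_singleton_iff (hxa : x ≠ a) (hxb : x ≠ b) :
    x ∈ compress {a} {b} A ↔ x ∈ A := by
  rw [compress_singleton]
  split_ifs <;> simp [hxa, hxb]

theorem compress_singleton_subset : compress {a} {b} A ⊆ insert a A := by
  rw [compress_singleton]
  split_ifs
  exacts [insert_subset_insert _ (erase_subset _ _), subset_insert _ _]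

theorem compress_singleton_inter_subset (haA : a ∉ A) (haB : a ∉ B) :
    compress {a} {b} A ∩ B ⊆ (A ∩ B).erase b := by
  rw [compress_singleton]
  split_ifs with h
  · intro x
    simp only [mem_inter, mem_insert, mem_erase]
    rintro ⟨rfl | ⟨hxb, hxA⟩, hxB⟩
    exacts [absurd hxB haB, ⟨hxb, hxA, hxB⟩]
  · intro x hx
    have hb : b ∉ A := fun hb ↦ h ⟨haA, hb⟩
    exact mem_erase.2 ⟨fun hxb ↦ hb (hxb ▸ (mem_inter.1 hx).1), hx⟩

theorem sum_compress_singleton_lt {f : α → ℕ} (hf : f a < f b) (h : compress {a} {b} A ≠ A) :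
    ∑ x ∈ compress {a} {b} A, f x < ∑ x ∈ A, f x := by
  obtain ⟨haA, hbA, hA⟩ := compress_singleton_of_ne h
  rw [hA, sum_insert fun ha ↦ haA (mem_of_mem_erase ha), ← add_sum_erase A f hbA]
  omega

theorem exists_isCompressed_singleton {ι : Type*} {S : Set ι} (x y : ι → α)
    (P : Finset (Finset α) → Prop) (f : α → ℕ) (hf : ∀ i ∈ S, f (x i) < f (y i))
    (hP : ∀ i ∈ S, ∀ 𝒜, P 𝒜 → P (𝓒 {x i} {y i} 𝒜)) (h𝒜 : P 𝒜) :
    ∃ ℬ, P ℬ ∧ ∀ i ∈ S, IsCompressed {x i} {y i} ℬ :=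
  exists_isCompressed (fun i ↦ {x i}) (fun i ↦ {y i}) P (fun A ↦ ∑ a ∈ A, f a)
    (fun i hi _ h ↦ sum_compress_singleton_lt (hf i hi) h) hP h𝒜

/-- If `b` is the only common element of `A` and `B`, then either `a ∈ A`, or the compression of
`A`, which lies in `𝒜`, meets `B` outside `{a, b}`. -/
theorem not_disjoint_compress_singleton (h𝒜 : (𝒜 : Set (Finset α)).Intersecting)
    (hA : A ∈ 𝒜) (hcA : compress {a} {b} A ∈ 𝒜) (hB : B ∈ 𝒜) (hcB : compress {a} {b} B ≠ B) :
    ¬Disjoint A (compress {a} {b} B) := by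
  obtain ⟨haB, -, hB'⟩ := compress_singleton_of_ne hcB
  obtain ⟨y, hyA, hyB⟩ := not_disjoint_iff.1 (h𝒜 hA hB)
  rw [hB', not_disjoint_iff]
  by_cases hyb : y = b
  · subst hyb
    by_cases haA : a ∈ A
    · exact ⟨a, haA, mem_insert_self _ _⟩
    obtain ⟨z, hzA, hzB⟩ := not_disjoint_iff.1 (h𝒜 hcA hB)
    rw [compress_singleton, if_pos ⟨haA, hyA⟩, mem_insert, mem_erase] at hzA
    obtain rfl | ⟨hzy, hzA⟩ := hzA
    exacts [absurd hzB haB, ⟨z, hzA, mem_insert_of_mem (mem_erase.2 ⟨hzy, hzB⟩)⟩]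
  · exact ⟨y, hyA, mem_insert_of_mem (mem_erase.2 ⟨hyb, hyB⟩)⟩

theorem intersecting_compression (h𝒜 : (𝒜 : Set (Finset α)).Intersecting) :
    ((𝓒 {a} {b} 𝒜 : Finset (Finset α)) : Set (Finset α)).Intersecting := by
  have moved : ∀ {C}, C ∈ 𝓒 {a} {b} 𝒜 → C ∉ 𝒜 →
      ∃ B ∈ 𝒜, compress {a} {b} B ≠ B ∧ C = compress {a} {b} B := by
    intro C hC hC𝒜
    obtain ⟨-, B, hB, rfl⟩ := (mem_compression.1 hC).resolve_left fun h ↦ hC𝒜 h.1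
    exact ⟨B, hB, fun h ↦ hC𝒜 (h.symm ▸ hB), rfl⟩
  intro C hC D hD
  by_cases hC𝒜 : C ∈ 𝒜 <;> by_cases hD𝒜 : D ∈ 𝒜
  · exact h𝒜 hC𝒜 hD𝒜
  · obtain ⟨B, hB, hcB, rfl⟩ := moved hD hD𝒜
    exact not_disjoint_compress_singleton h𝒜 hC𝒜
      ((mem_compression.1 hC).resolve_right fun h ↦ h.1 hC𝒜).2 hB hcB
  · obtain ⟨B, hB, hcB, rfl⟩ := moved hC hC𝒜
    exact fun h ↦ not_disjoint_compress_singleton h𝒜 hD𝒜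
      ((mem_compression.1 hD).resolve_right fun h ↦ h.1 hD𝒜).2 hB hcB h.symm
  · obtain ⟨A, -, hcA, rfl⟩ := moved hC hC𝒜
    obtain ⟨B, -, hcB, rfl⟩ := moved hD hD𝒜
    rw [(compress_singleton_of_ne hcA).2.2, (compress_singleton_of_ne hcB).2.2]
    exact not_disjoint_iff.2 ⟨a, mem_insert_self _ _, mem_insert_self _ _⟩

end Finset

end UV

theorem Set.Intersecting.nonempty_of_mem {α : Type*} [DecidableEq α] {𝒜 : Finset (Finset α)}
    (h𝒜 : (𝒜 : Set (Finset α)).Intersecting) {A : Finset α} (hA : A ∈ 𝒜) : A.Nonempty :=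
  Finset.nonempty_iff_ne_empty.2 (h𝒜.ne_bot hA)

namespace Finset

variable {α : Type*} [DecidableEq α]

theorem card_le_one_of_intersecting {𝒜 : Finset (Finset α)}
    (h𝒜 : (𝒜 : Set (Finset α)).Intersecting) (hcard : ∀ A ∈ 𝒜, #A ≤ 1) : #𝒜 ≤ 1 := by
  refine card_le_one.2 fun A hA B hB ↦ ?_
  obtain ⟨x, hxA, hxB⟩ := not_disjoint_iff.1 (h𝒜 hA hB)
  have hsingleton : ∀ C ∈ 𝒜, x ∈ C → C = {x} := fun C hC hxC ↦
    eq_singleton_iff_unique_mem.2 ⟨hxC, fun y hy ↦ card_le_one.1 (hcard C hC) _ hy _ hxC⟩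
  rw [hsingleton A hA hxA, hsingleton B hB hxB]

theorem erdos_ko_rado_of_subset_powersetCard {G : Finset α} {𝒜 : Finset (Finset α)}
    {k : ℕ} (h𝒜 : (𝒜 : Set (Finset α)).Intersecting) (hG : 𝒜 ⊆ G.powersetCard k)
    (hk : 2 * k ≤ #G) : #𝒜 ≤ (#G - 1).choose (k - 1) := by
  let F : Finset α → Finset (Fin #G) := fun A ↦ (A.subtype (· ∈ G)).map G.equivFin.toEmbedding
  have hsub : ∀ A ∈ 𝒜, A ⊆ G := fun A hA ↦ (mem_powersetCard.1 (hG hA)).1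
  have hF : ∀ A ∈ 𝒜, ∀ x, G.equivFin x ∈ F A ↔ (x : α) ∈ A := by
    intro A hA x
    simp [F]
  have hinj : Set.InjOn F 𝒜 := by
    intro A hA B hB h
    ext x
    by_cases hx : x ∈ G
    · simpa [hF A hA ⟨x, hx⟩, hF B hB ⟨x, hx⟩] using congrArg (G.equivFin ⟨x, hx⟩ ∈ ·) h
    · exact iff_of_false (fun h ↦ hx (hsub A hA h)) fun h ↦ hx (hsub B hB h)
  have := erdos_ko_rado (𝒜 := 𝒜.image F) (r := k) ?_ ?_ (by omega)
  · rwa [card_image_of_injOn hinj] at this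
  · simp only [coe_image]
    rintro _ ⟨A, hA, rfl⟩ _ ⟨B, hB, rfl⟩ hAB
    obtain ⟨x, hxA, hxB⟩ := not_disjoint_iff.1 (h𝒜 hA hB)
    exact disjoint_left.1 hAB ((hF A hA ⟨x, hsub A hA hxA⟩).2 hxA)
      ((hF B hB ⟨x, hsub A hA hxA⟩).2 hxB)
  · simp only [coe_image]
    rintro _ ⟨A, hA, rfl⟩
    simp [F, card_subtype, filter_true_of_mem (hsub A hA), (mem_powersetCard.1 (hG hA)).2]

theorem card_add_card_le_choose_of_forall_not_disjoint {G : Finset α}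
    {𝒜 ℬ : Finset (Finset α)} {k l : ℕ} (h𝒜 : 𝒜 ⊆ G.powersetCard k) (hℬ : ℬ ⊆ G.powersetCard l)
    (hkl : k + l = #G) (h : ∀ A ∈ 𝒜, ∀ B ∈ ℬ, ¬Disjoint A B) : #𝒜 + #ℬ ≤ (#G).choose k := by
  have hcompl : ℬ.image (G \ ·) ⊆ G.powersetCard k := by
    simp only [image_subset_iff, mem_powersetCard]
    intro B hB
    obtain ⟨hBG, hBl⟩ := mem_powersetCard.1 (hℬ hB)
    exact ⟨sdiff_subset, by rw [card_sdiff_of_subset hBG]; omega⟩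
  have hinj : Set.InjOn (G \ ·) ℬ := fun B hB C hC hBC ↦ by
    rw [← sdiff_sdiff_eq_self (mem_powersetCard.1 (hℬ hB)).1,
      ← sdiff_sdiff_eq_self (mem_powersetCard.1 (hℬ hC)).1]
    exact congrArg (G \ ·) hBC
  have hdisj : Disjoint 𝒜 (ℬ.image (G \ ·)) := by
    simp only [disjoint_left, mem_image, not_exists, not_and]
    rintro A hA B hB rfl
    exact h _ hA B hB sdiff_disjoint
  rw [← card_image_of_injOn hinj, ← card_union_of_disjoint hdisj, ← card_powersetCard]
  exact card_le_card (union_subset h𝒜 hcompl)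

end Finset

theorem Nat.sum_range_choose_mul_choose (N R : ℕ) :
    ∑ j ∈ range (R + 1), N.choose j * (N - j).choose (R - j) = 2 ^ R * N.choose R := by
  rw [← Nat.sum_range_choose R, mul_comm, mul_sum]
  refine sum_congr rfl fun j hj ↦ ?_
  exact (Nat.choose_mul (Nat.lt_succ_iff.1 (mem_range.1 hj))).symm

namespace DepthTwoClaw

/-- Necessary conditions for `V` to be the set of indices of the `x`-vertices of an
`r`-independent set of `Tₙ`, where the index `0` stands for `x₀`. -/
structure Admissible (n r : ℕ) (V : Finset ℕ) : Prop where
  subset_range : V ⊆ range (n + 1)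
  card_le : #V ≤ r
  card_eq_of_zero_mem : 0 ∈ V → #V = r

/-- The number of `r`-independent sets of `Tₙ` whose set of `x`-indices is `V`: if `x₀` is
present there are no `y`-vertices, otherwise the `y`-indices form an `(r - #V)`-subset of
`[n] \ V`. -/
def weight (n r : ℕ) (V : Finset ℕ) : ℕ := if 0 ∈ V then 1 else (n - #V).choose (r - #V)

/-- The number of `r`-independent sets of `Tₙ` in the star of `x₁` that avoid the center `x₀`. -/
def offCenterStarCard (n r : ℕ) : ℕ := 2 ^ (r - 1) * (n - 1).choose (r - 1)

/-- The case split avoids the truncated `r - 2` at `r = 1`. -/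
def centerStarCard (n r : ℕ) : ℕ := if 2 ≤ r then (n - 1).choose (r - 2) else 0

/-- The weighted form of the theorem. The sharper bound for families avoiding `0` is what the
induction on `n` needs. -/
def WeightBound (n r : ℕ) : Prop :=
  ∀ 𝒱 : Finset (Finset ℕ), (∀ V ∈ 𝒱, Admissible n r V) → (𝒱 : Set (Finset ℕ)).Intersecting →
    ∑ V ∈ 𝒱, weight n r V ≤
      offCenterStarCard n r + if ∃ V ∈ 𝒱, 0 ∈ V then centerStarCard n r else 0

namespace Admissible

variable {n r a b : ℕ} {V : Finset ℕ}

theorem subset_Icc (h : Admissible n r V) (h0 : 0 ∉ V) : V ⊆ Icc 1 n := fun x hx ↦ by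
  have := mem_range.1 (h.subset_range hx)
  have : x ≠ 0 := fun hx0 ↦ h0 (hx0 ▸ hx)
  simp only [mem_Icc]
  omega

theorem compress (h : Admissible n r V) (ha : a ∈ Icc 1 n) (hb : b ≠ 0) :
    Admissible n r (UV.compress {a} {b} V) where
  subset_range := UV.compress_singleton_subset.trans <|
    insert_subset (mem_range.2 (by simp only [mem_Icc] at ha; omega)) h.subset_range
  card_le := (UV.card_compress (by simp) V).trans_le h.card_le
  card_eq_of_zero_mem h0 := (UV.card_compress (by simp) V).trans <| h.card_eq_of_zero_mem <|
    (UV.mem_compress_singleton_iff (by simp only [mem_Icc] at ha; omega) hb.symm).1 h0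

theorem of_notMem (h : Admissible (n + 1) r V) (hn : n + 1 ∉ V) : Admissible n r V where
  subset_range x hx := by
    have := mem_range.1 (h.subset_range hx)
    have : x ≠ n + 1 := fun hxn ↦ hn (hxn ▸ hx)
    exact mem_range.2 (by omega)
  card_le := h.card_le
  card_eq_of_zero_mem := h.card_eq_of_zero_mem

theorem erase (h : Admissible (n + 1) (r + 1) V) (hn : n + 1 ∈ V) :
    Admissible n r (V.erase (n + 1)) where
  subset_range x hx := by
    have := mem_range.1 (h.subset_range (mem_of_mem_erase hx))
    exact mem_range.2 (by have := ne_of_mem_erase hx; omega)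
  card_le := by have := h.card_le; rw [card_erase_of_mem hn]; omega
  card_eq_of_zero_mem h0 := by
    rw [card_erase_of_mem hn, h.card_eq_of_zero_mem (mem_of_mem_erase h0)]
    rfl

end Admissible

section Weight

variable {n r : ℕ} {V : Finset ℕ}

theorem weight_of_card_eq (h : #V = r) : weight n r V = 1 := by
  simp [weight, h]

theorem weight_compress {a b : ℕ} (ha : a ≠ 0) (hb : b ≠ 0) :
    weight n r (UV.compress {a} {b} V) = weight n r V := by
  have hcard : #(UV.compress {a} {b} V) = #V := UV.card_compress (by simp) V
  simp only [weight, UV.mem_compress_singleton_iff ha.symm hb.symm, hcard]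

theorem weight_succ_of_notMem (h : Admissible (n + 1) (r + 1) V) (hn : n + 1 ∉ V) :
    weight (n + 1) (r + 1) V =
      weight n (r + 1) V + if 0 ∉ V ∧ #V ≤ r then weight n r V else 0 := by
  by_cases h0 : 0 ∈ V
  · simp [weight, h0]
  have hVn : #V ≤ n := by
    simpa using card_le_card ((h.of_notMem hn).subset_Icc h0)
  by_cases hVr : #V ≤ r
  · simp only [weight, h0, if_false, not_false_eq_true, true_and, hVr, if_true]
    rw [show n + 1 - #V = n - #V + 1 by omega, show r + 1 - #V = r - #V + 1 by omega,
      Nat.choose_succ_succ', add_comm]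
  · have hVr : #V = r + 1 := le_antisymm h.card_le (by omega)
    simp [weight_of_card_eq hVr, hVr]

theorem weight_succ_of_mem (hn : n + 1 ∈ V) :
    weight (n + 1) (r + 1) V = weight n r (V.erase (n + 1)) := by
  have hV := card_erase_add_one hn
  simp only [weight, mem_erase, Nat.succ_ne_zero (n := n) |>.symm, ne_eq, not_false_eq_true,
    true_and]
  congr 2 <;> omega

end Weight

theorem offCenterStarCard_succ {n r : ℕ} (hn : 1 ≤ n) (hr : 1 ≤ r) :
    offCenterStarCard (n + 1) (r + 1) =
      offCenterStarCard n (r + 1) + 2 * offCenterStarCard n r := by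
  obtain ⟨n, rfl⟩ := Nat.exists_eq_add_of_le' hn
  obtain ⟨r, rfl⟩ := Nat.exists_eq_add_of_le' hr
  simp only [offCenterStarCard, Nat.add_sub_cancel, Nat.choose_succ_succ', pow_succ]
  ring

theorem centerStarCard_succ {n r : ℕ} (hn : 1 ≤ n) (hr : 1 ≤ r) :
    centerStarCard (n + 1) (r + 1) = centerStarCard n (r + 1) + centerStarCard n r := by
  obtain ⟨n, rfl⟩ := Nat.exists_eq_add_of_le' hn
  obtain rfl | ⟨r, rfl⟩ : r = 1 ∨ ∃ k, r = k + 2 := by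
    rcases Nat.lt_or_ge r 2 with h | h
    exacts [.inl (by omega), .inr ⟨r - 2, by omega⟩]
  · simp [centerStarCard]
  · simp only [centerStarCard, show 2 ≤ r + 2 + 1 by omega, show 2 ≤ r + 2 by omega, if_true,
      Nat.add_sub_cancel, show r + 2 + 1 - 2 = r + 1 by omega, Nat.choose_succ_succ']
    ring

theorem weightBound_one {n : ℕ} : WeightBound n 1 := by
  intro 𝒱 h𝒱 hint
  have hcard : ∀ V ∈ 𝒱, #V = 1 := fun V hV ↦
    le_antisymm (h𝒱 V hV).card_le (card_pos.2 (hint.nonempty_of_mem hV))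
  calc ∑ V ∈ 𝒱, weight n 1 V = #𝒱 := by
        rw [card_eq_sum_ones]
        exact sum_congr rfl fun V hV ↦ weight_of_card_eq (hcard V hV)
    _ ≤ 1 := card_le_one_of_intersecting hint fun V hV ↦ (hcard V hV).le
    _ ≤ _ := by simp [offCenterStarCard]

def level (𝒱 : Finset (Finset ℕ)) (k : ℕ) : Finset (Finset ℕ) := {V ∈ 𝒱 | 0 ∉ V ∧ #V = k}

def throughCenter (𝒱 : Finset (Finset ℕ)) : Finset (Finset ℕ) := {V ∈ 𝒱 | 0 ∈ V}

section Levels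

variable {n r k : ℕ} {𝒱 : Finset (Finset ℕ)}

theorem sum_weight_eq_sum_range (h𝒱 : ∀ V ∈ 𝒱, Admissible (n + 1) (r + 1) V)
    (hne : ∀ V ∈ 𝒱, V.Nonempty) :
    ∑ V ∈ 𝒱, weight (n + 1) (r + 1) V =
      ∑ j ∈ range (r + 1), (n - j).choose (r - j) * #(level 𝒱 (j + 1)) + #(throughCenter 𝒱) := by
  rw [← sum_filter_not_add_sum_filter 𝒱 (0 ∈ ·)]
  congr 1
  · rw [← sum_fiberwise_of_maps_to (g := fun V ↦ #V - 1) (t := range (r + 1)) fun V hV ↦ by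
      have := (h𝒱 V (mem_filter.1 hV).1).card_le
      have := card_pos.2 (hne V (mem_filter.1 hV).1)
      simp only [mem_range]
      omega]
    refine sum_congr rfl fun j _ ↦ ?_
    have hlevel : {V ∈ 𝒱 | 0 ∉ V ∧ #V - 1 = j} = level 𝒱 (j + 1) :=
      filter_congr fun V hV ↦ and_congr_right fun _ ↦ by have := card_pos.2 (hne V hV); omega
    rw [filter_filter, hlevel, mul_comm]
    refine sum_const_nat fun V hV ↦ ?_
    obtain ⟨-, h0, hV⟩ := mem_filter.1 hV
    rw [weight, if_neg h0, hV, Nat.add_sub_add_right, Nat.add_sub_add_right]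
  · rw [throughCenter, card_eq_sum_ones]
    exact sum_congr rfl fun V hV ↦ by simp [weight, (mem_filter.1 hV).2]

theorem level_subset_powersetCard (h𝒱 : ∀ V ∈ 𝒱, Admissible n r V) (k : ℕ) :
    level 𝒱 k ⊆ (Icc 1 n).powersetCard k := fun V hV ↦ by
  obtain ⟨hV, h0, hVk⟩ := mem_filter.1 hV
  exact mem_powersetCard.2 ⟨(h𝒱 V hV).subset_Icc h0, hVk⟩

theorem card_level_le (h𝒱 : ∀ V ∈ 𝒱, Admissible n r V)
    (hint : (𝒱 : Set (Finset ℕ)).Intersecting) (hk : 2 * k ≤ n) :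
    #(level 𝒱 k) ≤ (n - 1).choose (k - 1) := by
  refine (erdos_ko_rado_of_subset_powersetCard
    (hint.mono (coe_subset.2 (filter_subset _ _))) (level_subset_powersetCard h𝒱 k)
    (by simpa using hk)).trans_eq (by simp)

theorem card_level_add_card_level_succ_le (h𝒱 : ∀ V ∈ 𝒱, Admissible (2 * k + 1) r V)
    (hint : (𝒱 : Set (Finset ℕ)).Intersecting) :
    #(level 𝒱 k) + #(level 𝒱 (k + 1)) ≤ (2 * k + 1).choose k := by
  simpa using card_add_card_le_choose_of_forall_not_disjoint (level_subset_powersetCard h𝒱 k)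
    (level_subset_powersetCard h𝒱 (k + 1)) (by simp; omega)
    fun A hA B hB ↦ hint (mem_filter.1 hA).1 (mem_filter.1 hB).1

theorem card_throughCenter_add_card_level_succ_le
    (h𝒱 : ∀ V ∈ 𝒱, Admissible (2 * k + 1) (k + 1) V) (hint : (𝒱 : Set (Finset ℕ)).Intersecting) :
    #(throughCenter 𝒱) + #(level 𝒱 (k + 1)) ≤ (2 * k + 1).choose k := by
  have hsub : (throughCenter 𝒱).image (·.erase 0) ⊆ (Icc 1 (2 * k + 1)).powersetCard k := by
    simp only [image_subset_iff, throughCenter, mem_filter, mem_powersetCard]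
    intro V ⟨hV, h0⟩
    refine ⟨fun x hx ↦ ?_, by rw [card_erase_of_mem h0, (h𝒱 V hV).card_eq_of_zero_mem h0]; rfl⟩
    have := mem_range.1 ((h𝒱 V hV).subset_range (mem_of_mem_erase hx))
    have := ne_of_mem_erase hx
    exact mem_Icc.2 (by omega)
  rw [← card_image_of_injOn (s := throughCenter 𝒱) (f := (·.erase 0))
    fun A hA B hB ↦ erase_injOn' 0 (mem_filter.1 hA).2 (mem_filter.1 hB).2]
  refine (card_add_card_le_choose_of_forall_not_disjoint hsub
    (level_subset_powersetCard h𝒱 (k + 1)) (by simp; omega) ?_).trans_eq (by simp)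
  simp only [mem_image, throughCenter, level, mem_filter, forall_exists_index, and_imp]
  rintro _ A hA - rfl B hB h0B -
  obtain ⟨x, hxA, hxB⟩ := not_disjoint_iff.1 (hint hA hB)
  exact not_disjoint_iff.2 ⟨x, mem_erase.2 ⟨fun hx ↦ h0B (hx ▸ hxB), hxA⟩, hxB⟩

end Levels

/-- At `n = 2r - 1`, Erdős–Ko–Rado bounds every level below `r`, and the level `r` shares the
complements of `(r - 1)`-sets with the level `r - 1`, or with the sets through `0`. This matches
the weight of the star level by level (`Nat.sum_range_choose_mul_choose`). -/
theorem weightBound_base (m : ℕ) : WeightBound (2 * m + 3) (m + 2) := by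
  intro 𝒱 h𝒱 hint
  have hsum := sum_weight_eq_sum_range (n := 2 * m + 2) (r := m + 1) h𝒱
    fun V hV ↦ hint.nonempty_of_mem hV
  have hstar := Nat.sum_range_choose_mul_choose (2 * m + 2) (m + 1)
  have hlow : ∑ j ∈ range m, (2 * m + 2 - j).choose (m + 1 - j) * #(level 𝒱 (j + 1)) ≤
      ∑ j ∈ range m, (2 * m + 2).choose j * (2 * m + 2 - j).choose (m + 1 - j) := by
    refine sum_le_sum fun j hj ↦ ?_
    rw [mul_comm ((2 * m + 2).choose j)]
    have := card_level_le h𝒱 hint (k := j + 1) (by have := mem_range.1 hj; omega)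
    exact Nat.mul_le_mul_left _ (by simpa using this)
  have htop : #(level 𝒱 (m + 1)) ≤ (2 * m + 2).choose m := by
    simpa using card_level_le h𝒱 hint (k := m + 1) (by omega)
  have hpure := card_level_add_card_level_succ_le (k := m + 1) h𝒱 hint
  have hcenter := card_throughCenter_add_card_level_succ_le (k := m + 1) h𝒱 hint
  have hpascal : (2 * m + 3).choose (m + 1) = (2 * m + 2).choose m + (2 * m + 2).choose (m + 1) :=
    Nat.choose_succ_succ' _ _
  simp only [sum_range_succ, show 2 * m + 2 - m = m + 2 by omega,
    show 2 * m + 2 - (m + 1) = m + 1 by omega, Nat.add_sub_cancel_left, Nat.sub_self,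
    Nat.choose_one_right, Nat.choose_zero_right] at hsum hstar
  rw [show 2 * (m + 1) + 1 = 2 * m + 3 by ring] at hpure hcenter
  change ∑ V ∈ 𝒱, weight (2 * m + 2 + 1) (m + 1 + 1) V ≤ _
  rw [hsum, offCenterStarCard, centerStarCard, if_pos (show 2 ≤ m + 2 by omega)]
  simp only [show m + 2 - 1 = m + 1 by omega, show m + 2 - 2 = m by omega,
    show 2 * m + 3 - 1 = 2 * m + 2 by omega]
  split_ifs with hz
  · linarith [Nat.mul_le_mul_left (m + 2) htop]
  · have : #(throughCenter 𝒱) = 0 :=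
      card_eq_zero.2 (filter_eq_empty_iff.2 fun V hV h0 ↦ hz ⟨V, hV, h0⟩)
    linarith [Nat.mul_le_mul_left (m + 1) htop]

section Step

variable {n r : ℕ} {𝒱 𝒲 : Finset (Finset ℕ)}

theorem sum_weight_succ_eq (h𝒲 : ∀ V ∈ 𝒲, Admissible (n + 1) (r + 1) V) :
    ∑ V ∈ 𝒲, weight (n + 1) (r + 1) V =
      ∑ V ∈ 𝒲 with n + 1 ∉ V, weight n (r + 1) V +
        ∑ V ∈ 𝒲 with n + 1 ∉ V ∧ 0 ∉ V ∧ #V ≤ r, weight n r V +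
          ∑ V ∈ {V ∈ 𝒲 | n + 1 ∈ V}.image (·.erase (n + 1)), weight n r V := by
  rw [← sum_filter_not_add_sum_filter 𝒲 (n + 1 ∈ ·), ← filter_filter, sum_filter (s := filter _ _),
    ← sum_add_distrib, sum_image (s := {V ∈ 𝒲 | n + 1 ∈ V}) (g := (·.erase (n + 1)))
      fun A hA B hB ↦ erase_injOn' _ (mem_filter.1 hA).2 (mem_filter.1 hB).2]
  congr 1
  · exact sum_congr rfl fun V hV ↦
      weight_succ_of_notMem (h𝒲 V (mem_filter.1 hV).1) (mem_filter.1 hV).2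
  · exact sum_congr rfl fun V hV ↦ weight_succ_of_mem (mem_filter.1 hV).2

theorem exists_isCompressed_succ (h𝒱 : ∀ V ∈ 𝒱, Admissible (n + 1) (r + 1) V)
    (hint : (𝒱 : Set (Finset ℕ)).Intersecting) :
    ∃ 𝒲 : Finset (Finset ℕ), ((∀ V ∈ 𝒲, Admissible (n + 1) (r + 1) V) ∧
      (𝒲 : Set (Finset ℕ)).Intersecting ∧
      ∑ V ∈ 𝒲, weight (n + 1) (r + 1) V = ∑ V ∈ 𝒱, weight (n + 1) (r + 1) V ∧
      ((∀ V ∈ 𝒱, 0 ∉ V) → ∀ V ∈ 𝒲, 0 ∉ V)) ∧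
      ∀ a ∈ Set.Icc 1 n, UV.IsCompressed {a} {n + 1} 𝒲 := by
  refine UV.exists_isCompressed_singleton id (fun _ ↦ n + 1) _ (fun x ↦ if x = n + 1 then 1 else 0)
    (fun a ha ↦ by have := ha.2; simp; omega) (fun a ha 𝒲 ⟨h𝒲, hint𝒲, hsum, hzero⟩ ↦ ?_)
    ⟨h𝒱, hint, rfl, id⟩
  have ha0 : a ≠ 0 := by have := ha.1; omega
  exact ⟨UV.forall_mem_compression h𝒲 fun V hV ↦ (h𝒲 V hV).compress
      (mem_Icc.2 ⟨ha.1, ha.2.trans n.le_succ⟩) n.succ_ne_zero,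
    UV.intersecting_compression hint𝒲,
    (UV.sum_compression_of_forall fun V _ ↦ weight_compress ha0 n.succ_ne_zero).trans hsum,
    fun h0 ↦ UV.forall_mem_compression (hzero h0) fun V hV hV0 ↦ hzero h0 V hV <|
      (UV.mem_compress_singleton_iff ha0.symm n.succ_ne_zero.symm).1 hV0⟩

/-- Two members through `n + 1` have at most `2r` further elements, so some `a ∈ [n]` avoids
both; compressing one of them from `n + 1` to `a` shows they meet outside `n + 1`. -/
theorem intersecting_image_erase (hn : 2 * r < n)
    (h𝒲 : ∀ V ∈ 𝒲, Admissible (n + 1) (r + 1) V) (hint : (𝒲 : Set (Finset ℕ)).Intersecting)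
    (hc : ∀ a ∈ Set.Icc 1 n, UV.IsCompressed {a} {n + 1} 𝒲) :
    (({V ∈ 𝒲 | n + 1 ∈ V}.image (·.erase (n + 1)) : Finset (Finset ℕ)) :
      Set (Finset ℕ)).Intersecting := by
  simp only [coe_image, coe_filter]
  rintro _ ⟨A, ⟨hA, hnA⟩, rfl⟩ _ ⟨B, ⟨hB, hnB⟩, rfl⟩
  have hcard : #(A.erase (n + 1) ∪ B.erase (n + 1)) < #(Icc 1 n) := by
    have := card_union_le (A.erase (n + 1)) (B.erase (n + 1))
    have := (h𝒲 A hA).card_le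
    have := (h𝒲 B hB).card_le
    simp only [card_erase_of_mem hnA, card_erase_of_mem hnB, Nat.card_Icc] at *
    omega
  obtain ⟨a, ha, haAB⟩ := exists_mem_notMem_of_card_lt_card hcard
  have ha' := mem_Icc.1 ha
  have hane : a ≠ n + 1 := by omega
  simp only [mem_union, mem_erase, hane, ne_eq, not_false_eq_true, true_and, not_or] at haAB
  obtain ⟨x, hxA, hxB⟩ := not_disjoint_iff.1 (hint ((hc a ha').compress_mem hA) hB)
  have hx := UV.compress_singleton_inter_subset haAB.1 haAB.2 (mem_inter.2 ⟨hxA, hxB⟩)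
  rw [mem_erase, mem_inter] at hx
  exact not_disjoint_iff.2 ⟨x, mem_erase.2 ⟨hx.1, hx.2.1⟩, mem_erase.2 ⟨hx.1, hx.2.2⟩⟩

theorem weightBound_succ (hr : 1 ≤ r) (hn : 2 * r < n) (ih₁ : WeightBound n (r + 1))
    (ih₂ : WeightBound n r) : WeightBound (n + 1) (r + 1) := by
  intro 𝒱 h𝒱 hint
  obtain ⟨𝒲, ⟨h𝒲, hint𝒲, hsum, hzero⟩, hc⟩ := exists_isCompressed_succ h𝒱 hint
  have h₁ := ih₁ {V ∈ 𝒲 | n + 1 ∉ V}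
    (fun V hV ↦ (h𝒲 V (mem_filter.1 hV).1).of_notMem (mem_filter.1 hV).2)
    (hint𝒲.mono (coe_subset.2 (filter_subset _ _)))
  have h₂ := ih₂ {V ∈ 𝒲 | n + 1 ∉ V ∧ 0 ∉ V ∧ #V ≤ r}
    (fun V hV ↦ by
      obtain ⟨hV, hnV, h0V, hVr⟩ := mem_filter.1 hV
      exact ⟨((h𝒲 V hV).of_notMem hnV).subset_range, hVr, fun h0 ↦ absurd h0 h0V⟩)
    (hint𝒲.mono (coe_subset.2 (filter_subset _ _)))
  have h₃ := ih₂ ({V ∈ 𝒲 | n + 1 ∈ V}.image (·.erase (n + 1)))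
    (fun V hV ↦ by
      obtain ⟨W, hW, rfl⟩ := mem_image.1 hV
      exact (h𝒲 W (mem_filter.1 hW).1).erase (mem_filter.1 hW).2)
    (intersecting_image_erase hn h𝒲 hint𝒲 hc)
  rw [if_neg fun ⟨V, hV, h0⟩ ↦ (mem_filter.1 hV).2.2.1 h0] at h₂
  rw [← hsum, sum_weight_succ_eq h𝒲, offCenterStarCard_succ (by omega) hr,
    centerStarCard_succ (by omega) hr]
  by_cases hz : ∃ V ∈ 𝒱, 0 ∈ V
  · rw [if_pos hz]
    split_ifs at h₁ h₃ <;> omega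
  · have h0 := hzero fun V hV h0 ↦ hz ⟨V, hV, h0⟩
    rw [if_neg hz, if_neg fun ⟨V, hV, h0V⟩ ↦ h0 V (mem_filter.1 hV).1 h0V] at *
    rw [if_neg fun ⟨_, hV, h0V⟩ ↦ by
      obtain ⟨W, hW, rfl⟩ := mem_image.1 hV
      exact h0 W (mem_filter.1 hW).1 (mem_of_mem_erase h0V)] at h₃
    omega

end Step

theorem weightBound {n r : ℕ} (hr : 1 ≤ r) (hrn : 2 * r - 1 ≤ n) : WeightBound n r := by
  induction n generalizing r with
  | zero => omega
  | succ n ih =>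
    obtain rfl | ⟨m, rfl⟩ : r = 1 ∨ ∃ m, r = m + 2 := by
      rcases Nat.lt_or_ge r 2 with h | h
      exacts [.inl (by omega), .inr ⟨r - 2, by omega⟩]
    · exact weightBound_one
    · rcases (show n + 1 = 2 * m + 3 ∨ 2 * m + 3 ≤ n by omega) with h | h
      · exact h ▸ weightBound_base m
      · exact weightBound_succ (by omega) (by omega) (ih (by omega) (by omega))
          (ih (by omega) (by omega))

section IndependentSets

variable {n r : ℕ} {I J : Finset (ℕ × ℕ)}

theorem mem_depthTwoClawVerts {v : ℕ × ℕ} :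
    v ∈ depthTwoClawVerts n ↔ v = (0, 0) ∨ (1 ≤ v.1 ∧ v.1 ≤ n) ∧ (v.2 = 1 ∨ v.2 = 2) := by
  simp [depthTwoClawVerts, mem_product]

theorem depthTwoClaw_adj {u v : ℕ × ℕ} :
    (depthTwoClaw n).Adj u v ↔
      ∃ i ∈ Icc 1 n, s(u, v) = s((0, 0), (i, 2)) ∨ s(u, v) = s((i, 1), (i, 2)) := by
  rw [depthTwoClaw, SimpleGraph.fromEdgeSet_adj, Set.mem_ofPred_eq, and_iff_left_iff_imp]
  rintro ⟨i, -, h | h⟩ rfl <;> simp only [Sym2.eq_iff] at h <;>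
    obtain ⟨rfl, h⟩ | ⟨rfl, h⟩ := h <;> simp at h

theorem mem_depthTwoClawIndep :
    I ∈ depthTwoClawIndep n r ↔ I ⊆ depthTwoClawVerts n ∧ #I = r ∧
      (∀ i, (i, 1) ∈ I → (i, 2) ∉ I) ∧ ((0, 0) ∈ I → ∀ i, (i, 2) ∉ I) := by
  simp only [depthTwoClawIndep, mem_filter, mem_powerset, depthTwoClaw_adj]
  refine and_congr_right fun hI ↦ and_congr_right fun _ ↦
    ⟨fun h ↦ ⟨fun i h1 h2 ↦ ?_, fun h0 i h2 ↦ ?_⟩, ?_⟩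
  · have := (mem_depthTwoClawVerts.1 (hI h2))
    exact h _ h1 _ h2 ⟨i, by simp_all, .inr rfl⟩
  · have := (mem_depthTwoClawVerts.1 (hI h2))
    exact h _ h0 _ h2 ⟨i, by simp_all, .inl rfl⟩
  · rintro ⟨hxy, h0⟩ u hu v hv ⟨i, -, h | h⟩ <;> rw [Sym2.eq_iff] at h
    · obtain ⟨rfl, rfl⟩ | ⟨rfl, rfl⟩ := h
      exacts [h0 hu i hv, h0 hv i hu]
    · obtain ⟨rfl, rfl⟩ | ⟨rfl, rfl⟩ := h
      exacts [hxy i hu hv, hxy i hv hu]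

theorem eq_of_mem_depthTwoClawVerts {v w : ℕ × ℕ} (hv : v ∈ depthTwoClawVerts n)
    (hw : w ∈ depthTwoClawVerts n) (h₁ : v.1 = w.1) (h₂ : v.2 = 2 ↔ w.2 = 2) : v = w := by
  rw [mem_depthTwoClawVerts] at hv hw
  obtain ⟨v₁, v₂⟩ := v
  obtain ⟨w₁, w₂⟩ := w
  simp only [Prod.mk.injEq] at *
  omega

/-- The indices of the `x`-vertices of `I`, with `x₀` contributing the index `0`. -/
def xIndices (I : Finset (ℕ × ℕ)) : Finset ℕ := {v ∈ I | v.2 ≠ 2}.image Prod.fst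

def yIndices (I : Finset (ℕ × ℕ)) : Finset ℕ := {v ∈ I | v.2 = 2}.image Prod.fst

theorem mem_yIndices {i : ℕ} : i ∈ yIndices I ↔ (i, 2) ∈ I := by
  simp only [yIndices, mem_image, mem_filter]
  exact ⟨fun ⟨v, ⟨hv, h2⟩, h1⟩ ↦ by rwa [← h1, ← h2], fun h ↦ ⟨_, ⟨h, rfl⟩, rfl⟩⟩

theorem card_xIndices_add_card_yIndices (hI : I ⊆ depthTwoClawVerts n) :
    #(xIndices I) + #(yIndices I) = #I := by
  have hx : #(xIndices I) = #{v ∈ I | v.2 ≠ 2} := card_image_of_injOn fun v hv w hw h ↦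
    eq_of_mem_depthTwoClawVerts (hI (mem_filter.1 hv).1) (hI (mem_filter.1 hw).1) h
      (iff_of_false (mem_filter.1 hv).2 (mem_filter.1 hw).2)
  have hy : #(yIndices I) = #{v ∈ I | v.2 = 2} := card_image_of_injOn fun v hv w hw h ↦
    eq_of_mem_depthTwoClawVerts (hI (mem_filter.1 hv).1) (hI (mem_filter.1 hw).1) h
      (iff_of_true (mem_filter.1 hv).2 (mem_filter.1 hw).2)
  rw [hx, hy, add_comm]
  exact card_filter_add_card_filter_not _

theorem eq_of_xIndices_eq_of_yIndices_eq (hI : I ⊆ depthTwoClawVerts n)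
    (hJ : J ⊆ depthTwoClawVerts n) (hx : xIndices I = xIndices J) (hy : yIndices I = yIndices J) :
    I = J := by
  suffices key : ∀ {I J}, I ⊆ depthTwoClawVerts n → J ⊆ depthTwoClawVerts n →
      xIndices I = xIndices J → yIndices I = yIndices J → I ⊆ J from
    (key hI hJ hx hy).antisymm (key hJ hI hx.symm hy.symm)
  intro I J hI hJ hx hy v hv
  by_cases hv2 : v.2 = 2
  · have := mem_yIndices.1 (hy ▸ mem_yIndices.2 (by rwa [← hv2]) : v.1 ∈ yIndices J)
    rwa [← hv2] at this
  · obtain ⟨w, hw, hwv⟩ := mem_image.1 (hx ▸ mem_image_of_mem Prod.fst (mem_filter.2 ⟨hv, hv2⟩) :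
      v.1 ∈ xIndices J)
    rw [mem_filter] at hw
    exact eq_of_mem_depthTwoClawVerts (hJ hw.1) (hI hv) hwv (iff_of_false hw.2 hv2) ▸ hw.1

theorem zero_zero_mem_of_zero_mem_xIndices (hI : I ⊆ depthTwoClawVerts n)
    (h0 : 0 ∈ xIndices I) : (0, 0) ∈ I := by
  obtain ⟨v, hv, hv0⟩ := mem_image.1 h0
  have hv' : v = (0, 0) :=
    (mem_depthTwoClawVerts.1 (hI (mem_filter.1 hv).1)).resolve_right fun h ↦ by omega
  exact hv' ▸ (mem_filter.1 hv).1

theorem disjoint_xIndices_yIndices (hI : I ∈ depthTwoClawIndep n r) :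
    Disjoint (xIndices I) (yIndices I) := by
  obtain ⟨hsub, -, hxy, h0⟩ := mem_depthTwoClawIndep.1 hI
  refine disjoint_left.2 fun i hx hy ↦ ?_
  obtain ⟨⟨i, j⟩, hv, rfl⟩ := mem_image.1 hx
  rw [mem_filter] at hv
  rcases mem_depthTwoClawVerts.1 (hsub hv.1) with h | ⟨-, h | h⟩ <;>
    simp only [Prod.mk.injEq] at h
  · obtain ⟨rfl, rfl⟩ := h
    exact h0 hv.1 0 (mem_yIndices.1 hy)
  · exact hxy i (h ▸ hv.1) (mem_yIndices.1 hy)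
  · exact hv.2 h

theorem yIndices_eq_empty (hI : I ∈ depthTwoClawIndep n r) (h0 : 0 ∈ xIndices I) :
    yIndices I = ∅ := by
  obtain ⟨hsub, -, -, hy⟩ := mem_depthTwoClawIndep.1 hI
  exact eq_empty_of_forall_notMem fun i hi ↦
    hy (zero_zero_mem_of_zero_mem_xIndices hsub h0) i (mem_yIndices.1 hi)

theorem admissible_xIndices (hI : I ∈ depthTwoClawIndep n r) : Admissible n r (xIndices I) where
  subset_range i hi := by
    obtain ⟨v, hv, rfl⟩ := mem_image.1 hi
    rcases mem_depthTwoClawVerts.1 ((mem_depthTwoClawIndep.1 hI).1 (mem_filter.1 hv).1) with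
      h | h
    · simp [h]
    · exact mem_range.2 (by omega)
  card_le := (mem_depthTwoClawIndep.1 hI).2.1 ▸ card_image_le.trans (card_filter_le _ _)
  card_eq_of_zero_mem h0 := by
    obtain ⟨hsub, hcard, -⟩ := mem_depthTwoClawIndep.1 hI
    simpa [yIndices_eq_empty hI h0, hcard] using card_xIndices_add_card_yIndices hsub

theorem yIndices_mem_powersetCard (hI : I ∈ depthTwoClawIndep n r) :
    yIndices I ∈ (Icc 1 n \ xIndices I).powersetCard (r - #(xIndices I)) := by
  obtain ⟨hsub, hcard, -⟩ := mem_depthTwoClawIndep.1 hI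
  refine mem_powersetCard.2 ⟨fun i hi ↦ mem_sdiff.2 ⟨?_, fun hix ↦ ?_⟩, ?_⟩
  · have := mem_depthTwoClawVerts.1 (hsub (mem_yIndices.1 hi))
    simp only [Prod.ext_iff] at this
    exact mem_Icc.2 (by omega)
  · exact disjoint_left.1 (disjoint_xIndices_yIndices hI) hix hi
  · have := card_xIndices_add_card_yIndices hsub
    omega

/-- An independent set is determined by its `x`-indices and its `y`-indices, and the latter are
a `(r - #V)`-subset of `[n] \ V`, or empty if `x₀` is present. -/
theorem card_filter_xIndices_eq_le {ℬ : Finset (Finset (ℕ × ℕ))}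
    (hℬ : ℬ ⊆ depthTwoClawIndep n r) (V : Finset ℕ) :
    #{I ∈ ℬ | xIndices I = V} ≤ weight n r V := by
  obtain hempty | ⟨I₀, hI₀⟩ := {I ∈ ℬ | xIndices I = V}.eq_empty_or_nonempty
  · simp [hempty]
  have hV : Admissible n r V :=
    (mem_filter.1 hI₀).2 ▸ admissible_xIndices (hℬ (mem_filter.1 hI₀).1)
  have hinj : Set.InjOn yIndices (({I ∈ ℬ | xIndices I = V} : Finset _) : Set _) :=
    fun I hI J hJ h ↦ by
      rw [mem_coe, mem_filter] at hI hJ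
      exact eq_of_xIndices_eq_of_yIndices_eq (mem_depthTwoClawIndep.1 (hℬ hI.1)).1
        (mem_depthTwoClawIndep.1 (hℬ hJ.1)).1 (hI.2.trans hJ.2.symm) h
  by_cases h0 : 0 ∈ V
  · rw [weight, if_pos h0]
    refine card_le_one.2 fun I hI J hJ ↦ hinj hI hJ ?_
    rw [mem_filter] at hI hJ
    rw [yIndices_eq_empty (hℬ hI.1) (hI.2 ▸ h0), yIndices_eq_empty (hℬ hJ.1) (hJ.2 ▸ h0)]
  · rw [weight, if_neg h0]
    calc #{I ∈ ℬ | xIndices I = V}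
        ≤ #((Icc 1 n \ V).powersetCard (r - #V)) := card_le_card_of_injOn yIndices
          (fun I hI ↦ (mem_filter.1 hI).2 ▸ yIndices_mem_powersetCard (hℬ (mem_filter.1 hI).1))
          hinj
      _ = (n - #V).choose (r - #V) := by
        rw [card_powersetCard, card_sdiff_of_subset (hV.subset_Icc h0), Nat.card_Icc,
          Nat.add_sub_cancel]

theorem card_le_sum_weight {ℬ : Finset (Finset (ℕ × ℕ))} (hℬ : ℬ ⊆ depthTwoClawIndep n r) :
    #ℬ ≤ ∑ V ∈ ℬ.image xIndices, weight n r V :=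
  (card_eq_sum_card_image xIndices ℬ).trans_le <|
    sum_le_sum fun V _ ↦ card_filter_xIndices_eq_le hℬ V

theorem compress_mem_depthTwoClawIndep (hI : I ∈ depthTwoClawIndep n r) (i : ℕ) :
    UV.compress {(i, 1)} {(i, 2)} I ∈ depthTwoClawIndep n r := by
  rw [UV.compress_singleton]
  split_ifs with h
  · obtain ⟨hsub, hcard, hxy, h0⟩ := mem_depthTwoClawIndep.1 hI
    have hi := mem_depthTwoClawVerts.1 (hsub h.2)
    simp only [Prod.ext_iff] at hi
    refine mem_depthTwoClawIndep.2 ⟨insert_subset (mem_depthTwoClawVerts.2 (.inr (by omega)))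
      ((erase_subset _ _).trans hsub), ?_, fun j hj1 hj2 ↦ ?_, fun h0' j hj2 ↦ ?_⟩
    · rw [card_insert_of_notMem fun h' ↦ h.1 (mem_of_mem_erase h'), card_erase_of_mem h.2]
      have := card_pos.2 ⟨_, h.2⟩
      omega
    · simp only [mem_insert, mem_erase, Prod.mk.injEq] at hj1 hj2
      obtain ⟨hne, hj2⟩ := hj2.resolve_left (by omega)
      rcases hj1 with ⟨rfl, -⟩ | ⟨-, hj1⟩
      exacts [hne rfl, hxy j hj1 hj2]
    · simp only [mem_insert, mem_erase, Prod.mk.injEq] at h0' hj2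
      exact h0 (h0'.resolve_left (by omega)).2 j (hj2.resolve_left (by omega)).2
  · exact hI

section Compressed

variable {ℬ : Finset (Finset (ℕ × ℕ))} (hℬ : ℬ ⊆ depthTwoClawIndep n r)
  (hint : (ℬ : Set (Finset (ℕ × ℕ))).Intersecting)
  (hc : ∀ i, UV.IsCompressed {(i, 1)} {(i, 2)} ℬ)
include hℬ hint hc

/-- If all common vertices of `A` and `B` were `y`-vertices, replacing one of them, `yᵢ`, by
`xᵢ` in `A` would give a member of `ℬ` with fewer common vertices with `B`. -/
theorem exists_mem_inter_snd_ne_two {A B : Finset (ℕ × ℕ)} (hA : A ∈ ℬ) (hB : B ∈ ℬ) :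
    ∃ v ∈ A, v ∈ B ∧ v.2 ≠ 2 := by
  induction hm : #(A ∩ B) using Nat.strong_induction_on generalizing A with
  | _ m ih =>
    obtain ⟨v, hvA, hvB⟩ := not_disjoint_iff.1 (hint hA hB)
    by_cases hv : v.2 ≠ 2
    · exact ⟨v, hvA, hvB, hv⟩
    obtain ⟨i, j⟩ := v
    obtain rfl : j = 2 := not_not.1 hv
    have hiA := (mem_depthTwoClawIndep.1 (hℬ hA)).2.2.1 i
    have hiB := (mem_depthTwoClawIndep.1 (hℬ hB)).2.2.1 i
    have hsub := UV.compress_singleton_inter_subset (b := (i, 2)) (fun h ↦ hiA h hvA)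
      fun h ↦ hiB h hvB
    obtain ⟨w, hwA, hwB, hw⟩ := ih _ (hm ▸ (card_le_card hsub).trans_lt
      (card_erase_lt_of_mem (mem_inter.2 ⟨hvA, hvB⟩))) ((hc i).compress_mem hA) rfl
    exact ⟨w, (mem_inter.1 (mem_of_mem_erase (hsub (mem_inter.2 ⟨hwA, hwB⟩)))).1, hwB, hw⟩

theorem intersecting_image_xIndices :
    ((ℬ.image xIndices : Finset (Finset ℕ)) : Set (Finset ℕ)).Intersecting := by
  simp only [coe_image]
  rintro _ ⟨A, hA, rfl⟩ _ ⟨B, hB, rfl⟩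
  obtain ⟨v, hvA, hvB, hv⟩ := exists_mem_inter_snd_ne_two hℬ hint hc hA hB
  exact not_disjoint_iff.2 ⟨v.1, mem_image_of_mem _ (mem_filter.2 ⟨hvA, hv⟩),
    mem_image_of_mem _ (mem_filter.2 ⟨hvB, hv⟩)⟩

end Compressed

theorem card_le_of_intersecting {ℰ : Finset (Finset (ℕ × ℕ))} (hr : 1 ≤ r)
    (hrn : 2 * r - 1 ≤ n) (hℰ : ℰ ⊆ depthTwoClawIndep n r)
    (hint : (ℰ : Set (Finset (ℕ × ℕ))).Intersecting) :
    #ℰ ≤ offCenterStarCard n r + centerStarCard n r := by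
  obtain ⟨ℬ, ⟨hℬ, hintℬ, hcard⟩, hc⟩ := UV.exists_isCompressed_singleton (S := Set.univ)
    (fun i ↦ (i, 1)) (fun i ↦ (i, 2))
    (fun ℬ ↦ ℬ ⊆ depthTwoClawIndep n r ∧ (ℬ : Set (Finset (ℕ × ℕ))).Intersecting ∧ #ℬ = #ℰ)
    (fun v ↦ if v.2 = 2 then 1 else 0) (fun _ _ ↦ by simp)
    (fun i _ ℬ ⟨hℬ, hint, hcard⟩ ↦ ⟨fun I hI ↦ UV.forall_mem_compression (fun J hJ ↦ hℬ hJ)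
      (fun J hJ ↦ compress_mem_depthTwoClawIndep (hℬ hJ) i) I hI,
      UV.intersecting_compression hint, (UV.card_compression _ _ _).trans hcard⟩)
    ⟨hℰ, hint, rfl⟩
  calc #ℰ = #ℬ := hcard.symm
    _ ≤ ∑ V ∈ ℬ.image xIndices, weight n r V := card_le_sum_weight hℬ
    _ ≤ offCenterStarCard n r + if ∃ V ∈ ℬ.image xIndices, 0 ∈ V then centerStarCard n r else 0 :=
      weightBound hr hrn _ (by simpa using fun I hI ↦ admissible_xIndices (hℬ hI))
        (intersecting_image_xIndices hℬ hintℬ fun i ↦ hc i trivial)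
    _ ≤ offCenterStarCard n r + centerStarCard n r := by split_ifs <;> omega

section Star

variable {X Y : Finset ℕ}

theorem image_union_image_mem_depthTwoClawIndep (hX : X ⊆ Icc 1 n) (hY : Y ⊆ Icc 1 n)
    (hXY : Disjoint X Y) (hcard : #X + #Y = r) :
    X.image (·, 1) ∪ Y.image (·, 2) ∈ depthTwoClawIndep n r := by
  refine mem_depthTwoClawIndep.2 ⟨?_, ?_, fun i h1 h2 ↦ ?_, by simp⟩
  · simp only [union_subset_iff, image_subset_iff, mem_depthTwoClawVerts]
    exact ⟨fun i hi ↦ .inr ⟨mem_Icc.1 (hX hi), by simp⟩,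
      fun i hi ↦ .inr ⟨mem_Icc.1 (hY hi), by simp⟩⟩
  · rw [card_union_of_disjoint (by simp [disjoint_left]),
      card_image_of_injective _ fun _ _ h ↦ (Prod.ext_iff.1 h).1,
      card_image_of_injective _ fun _ _ h ↦ (Prod.ext_iff.1 h).1, hcard]
  · simp only [mem_union, mem_image, Prod.mk.injEq] at h1 h2
    obtain ⟨a, ha, rfl, -⟩ := h1.resolve_right (by simp)
    obtain ⟨b, hb, rfl, -⟩ := h2.resolve_left (by simp)
    exact disjoint_left.1 hXY ha hb

theorem offCenterStarCard_le (hn : 1 ≤ n) (hr : 1 ≤ r) :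
    offCenterStarCard n r ≤ #{I ∈ depthTwoClawIndep n r | (1, 1) ∈ I ∧ (0, 0) ∉ I} := by
  let f : (Σ _ : Finset ℕ, Finset ℕ) → Finset (ℕ × ℕ) := fun p ↦
    (insert 1 p.2).image (·, 1) ∪ (p.1 \ p.2).image (·, 2)
  have h1 : ∀ {S X : Finset ℕ}, S ⊆ Icc 2 n → X ⊆ S → 1 ∉ X := fun hS hX h ↦ by
    simpa using hS (hX h)
  calc offCenterStarCard n r = #(((Icc 2 n).powersetCard (r - 1)).sigma powerset) := by
        rw [card_sigma, sum_const_nat fun S hS ↦ by rw [card_powerset,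
          (mem_powersetCard.1 hS).2], card_powersetCard, offCenterStarCard, mul_comm]
        simp
    _ ≤ _ := card_le_card_of_injOn f ?_ ?_
  · rintro ⟨S, X⟩ hp
    simp only [mem_coe, mem_sigma, mem_powersetCard, mem_powerset] at hp
    obtain ⟨⟨hS2, hS⟩, hXS⟩ := hp
    have hSn : S ⊆ Icc 1 n := hS2.trans (Icc_subset_Icc_left one_le_two)
    refine mem_filter.2
      ⟨image_union_image_mem_depthTwoClawIndep ?_ (sdiff_subset.trans hSn) ?_ ?_, by simp [f],
        by simp [f]⟩
    · exact insert_subset (by simp [hn]) (hXS.trans hSn)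
    · exact disjoint_insert_left.2 ⟨fun h ↦ h1 hS2 sdiff_subset h, disjoint_sdiff⟩
    · rw [card_insert_of_notMem (h1 hS2 hXS), card_sdiff_of_subset hXS, hS]
      have := card_le_card hXS
      omega
  · rintro ⟨S, X⟩ hp ⟨S', X'⟩ hp' h
    simp only [mem_coe, mem_sigma, mem_powersetCard, mem_powerset] at hp hp'
    have hX : insert 1 X = insert 1 X' := by
      ext j
      simpa [f] using congrArg ((j, 1) ∈ ·) h
    have hY : S \ X = S' \ X' := by
      ext j
      simpa [f] using congrArg ((j, 2) ∈ ·) h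
    obtain rfl : X = X' := by
      rw [← erase_insert (h1 hp.1.1 hp.2), hX, erase_insert (h1 hp'.1.1 hp'.2)]
    obtain rfl : S = S' := by
      rw [← sdiff_union_of_subset hp.2, ← sdiff_union_of_subset hp'.2, hY]
    rfl

theorem centerStarCard_le (hn : 1 ≤ n) :
    centerStarCard n r ≤ #{I ∈ depthTwoClawIndep n r | (1, 1) ∈ I ∧ (0, 0) ∈ I} := by
  rw [centerStarCard]
  split_ifs with hr
  swap
  · exact Nat.zero_le _
  have h1 : ∀ {T}, T ∈ (Icc 2 n).powersetCard (r - 2) → 1 ∉ T := fun hT h ↦ by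
    simpa using (mem_powersetCard.1 hT).1 h
  let f : Finset ℕ → Finset (ℕ × ℕ) := fun T ↦ insert (0, 0) ((insert 1 T).image (·, 1))
  calc (n - 1).choose (r - 2) = #((Icc 2 n).powersetCard (r - 2)) := by simp
    _ ≤ _ := card_le_card_of_injOn f ?_ ?_
  · intro T hT
    obtain ⟨hTn, hTc⟩ := mem_powersetCard.1 hT
    refine mem_filter.2 ⟨mem_depthTwoClawIndep.2 ⟨?_, ?_, by simp [f], by simp [f]⟩,
      by simp [f], by simp [f]⟩
    · simp only [f, insert_subset_iff, image_subset_iff, mem_depthTwoClawVerts, mem_insert]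
      refine ⟨by simp, fun i hi ↦ .inr ⟨?_, by simp⟩⟩
      rcases hi with rfl | hi
      exacts [⟨le_rfl, hn⟩, by have := mem_Icc.1 (hTn hi); omega]
    · rw [card_insert_of_notMem (by simp), card_image_of_injective _
        fun _ _ h ↦ (Prod.ext_iff.1 h).1, card_insert_of_notMem (h1 hT), hTc]
      omega
  · intro T hT T' hT' h
    have hX : insert 1 T = insert 1 T' := by
      ext j
      simpa [f] using congrArg ((j, 1) ∈ ·) h
    rw [← erase_insert (h1 hT), hX, erase_insert (h1 hT')]

theorem le_card_filter_mem_depthTwoClawIndep (hn : 1 ≤ n) (hr : 1 ≤ r) :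
    offCenterStarCard n r + centerStarCard n r ≤ #{I ∈ depthTwoClawIndep n r | (1, 1) ∈ I} := by
  rw [← card_filter_add_card_filter_not (s := {I ∈ depthTwoClawIndep n r | (1, 1) ∈ I})
    (fun I ↦ (0, 0) ∉ I), filter_filter, filter_filter]
  simp only [not_not]
  exact add_le_add (offCenterStarCard_le hn hr) (centerStarCard_le hn)

end Star

end IndependentSets

end DepthTwoClaw

theorem depthTwoClaw_star_property_of_large_n_general
    (n r : ℕ) (hr : 1 ≤ r) (hrn : 2 * r - 1 ≤ n)
    (ℰ : Finset (Finset (ℕ × ℕ)))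
    (hℰ : ℰ ⊆ depthTwoClawIndep n r)
    (hint : ∀ A ∈ ℰ, ∀ B ∈ ℰ, (A ∩ B).Nonempty) :
    ℰ.card ≤
      ((depthTwoClawIndep n r).filter (fun I => ((1 : ℕ), (1 : ℕ)) ∈ I)).card :=
  (DepthTwoClaw.card_le_of_intersecting hr hrn hℰ fun _ hA _ hB ↦
    not_disjoint_iff_nonempty_inter.2 (hint _ hA _ hB)).trans
      (DepthTwoClaw.le_card_filter_mem_depthTwoClawIndep (by omega) hr)

/-- **Theorem (Feghali, Johnson and Thomas).** If `n ≥ 2r - 1`, then every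
intersecting family of `r`-element independent sets of the depth-two claw `Tₙ`
has size at most the number of `r`-element independent sets of `Tₙ` containing
the vertex `x₁ = (1,1)`. -/
theorem depthTwoClaw_star_property_of_large_n
    (n r : ℕ) (hn : 1 ≤ n) (hr : 1 ≤ r) (hrn : 2 * r - 1 ≤ n)
    (ℰ : Finset (Finset (ℕ × ℕ)))
    (hℰ : ℰ ⊆ depthTwoClawIndep n r)
    (hint : ∀ A ∈ ℰ, ∀ B ∈ ℰ, (A ∩ B).Nonempty) :
    ℰ.card ≤
      ((depthTwoClawIndep n r).filter (fun I => ((1 : ℕ), (1 : ℕ)) ∈ I)).card :=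
  depthTwoClaw_star_property_of_large_n_general n r hr hrn ℰ hℰ hint
end

section
/- Let n ≥ 1 and k ≥ 2 be integers. Let ℒ_{n,k} be the family of all non-empty subsets A of [n] × [k] such that no two distinct elements of A have the same first coordinate. For (i,j) ∈ [n] × {2, ..., k}, define δ_{i,j} : ℒ_{n,k} → ℒ_{n,k} by δ_{i,j}(A) = (A \ {(i,j)}) ∪ {(i,1)} if (i,j) ∈ A, and δ_{i,j}(A) = A otherwise; and define the compression Δ_{i,j} on subfamilies of ℒ_{n,k} by Δ_{i,j}(𝒜) = {δ_{i,j}(A) : A ∈ 𝒜} ∪ {A ∈ 𝒜 : δ_{i,j}(A) ∈ 𝒜}. Let 𝒜 be an intersecting subfamily of ℒ_{n,k} and let 𝒜* = Δ_{n,k} ∘ ... ∘ Δ_{n,2} ∘ ... ∘ Δ_{1,k} ∘ ... ∘ Δ_{1,2}(𝒜) (that is, the result of applying the compressions Δ_{i,j} for i = 1, ..., n in increasing order of i, and for each i applying Δ_{i,2}, ..., Δ_{i,k} in increasing order of j). Then for any A, B ∈ 𝒜*, we have A ∩ B ∩ ([n] × {1}) ≠ ∅. -/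
/-- `ℒ_{n,k}`: the family of all non-empty subsets of `[n] × [k]` in which no two
distinct elements have the same first coordinate. -/
def labelledFamily (n k : ℕ) : Finset (Finset (ℕ × ℕ)) :=
  ((Finset.Icc 1 n) ×ˢ (Finset.Icc 1 k)).powerset.filter
    (fun A => A.Nonempty ∧ ∀ p ∈ A, ∀ q ∈ A, p.1 = q.1 → p = q)

/-- The elementary compression `δ_{i,j}` replacing `(i,j)` by `(i,1)`. -/
def delta (i j : ℕ) (A : Finset (ℕ × ℕ)) : Finset (ℕ × ℕ) :=
  if (i, j) ∈ A then insert (i, 1) (A.erase (i, j)) else A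

/-- The compression operation `Δ_{i,j}` on families. -/
def Delta (i j : ℕ) (𝒜 : Finset (Finset (ℕ × ℕ))) : Finset (Finset (ℕ × ℕ)) :=
  𝒜.image (delta i j) ∪ 𝒜.filter (fun A => delta i j A ∈ 𝒜)

/-- The list of index pairs `(i, j)` for `i = 1, …, n` in increasing order of `i`,
and for each `i` the values `j = 2, …, k` in increasing order of `j`; applying the
compressions in this order (leftmost first) yields
`𝒜* = Δ_{n,k} ∘ ⋯ ∘ Δ_{n,2} ∘ ⋯ ∘ Δ_{1,k} ∘ ⋯ ∘ Δ_{1,2}(𝒜)`. -/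
def compressionOrder (n k : ℕ) : List (ℕ × ℕ) :=
  (List.range n).flatMap (fun i => (List.range (k - 1)).map (fun j => (i + 1, j + 2)))

/-!
Every compression `Δ_{i,j}` with `j ≥ 2` keeps a family inside `ℒ_{n,k}` and keeps it
intersecting, and the elementary compressions `δ_{i,j}` commute, so `Δ_{a,b}` preserves
closure under `δ_{c,d}`; hence `𝒜*` is closed under every `δ_{i,j}` with `j ≥ 2`.
Given `A, B ∈ 𝒜*`, pick `A' ∈ 𝒜*` with `A' ∩ B ⊆ A ∩ B` and `|A' ∩ B|` minimal. If a common
point `(i,j)` had `j ≠ 1`, then `δ_{i,j}(A') ∩ B = (A' ∩ B) \ {(i,j)}`, because `(i,1) ∉ B`;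
so the non-empty set `A' ∩ B` lies on the first level.
-/

open Finset

lemma mem_labelledFamily {n k : ℕ} {A : Finset (ℕ × ℕ)} :
    A ∈ labelledFamily n k ↔
      A ⊆ Icc 1 n ×ˢ Icc 1 k ∧ A.Nonempty ∧ Set.InjOn Prod.fst (A : Set (ℕ × ℕ)) := by
  simp [labelledFamily, Set.InjOn]

section delta

variable {i j : ℕ} {A B : Finset (ℕ × ℕ)}

lemma delta_of_mem (h : (i, j) ∈ A) : delta i j A = insert (i, 1) (A.erase (i, j)) := if_pos h

lemma delta_of_notMem (h : (i, j) ∉ A) : delta i j A = A := if_neg h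

lemma notMem_delta (hj : j ≠ 1) : (i, j) ∉ delta i j A := by
  unfold delta
  split_ifs with h
  · simp [hj]
  · exact h

lemma delta_delta (hj : j ≠ 1) : delta i j (delta i j A) = delta i j A :=
  delta_of_notMem (notMem_delta hj)

lemma delta_comm {a b c d : ℕ} (hb : b ≠ 1) (hd : d ≠ 1) (A : Finset (ℕ × ℕ)) :
    delta a b (delta c d A) = delta c d (delta a b A) := by
  rcases eq_or_ne (a, b) (c, d) with h | hne
  · obtain ⟨rfl, rfl⟩ := Prod.mk.inj h
    rfl
  have hab : (a, b) ≠ (c, 1) := by simp [hb]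
  have hcd : (c, d) ≠ (a, 1) := by simp [hd]
  by_cases ha : (a, b) ∈ A <;> by_cases hc : (c, d) ∈ A
  · rw [delta_of_mem hc, delta_of_mem ha, delta_of_mem (by simp [ha, hne]),
      delta_of_mem (by simp [hc, hne.symm]), erase_insert_of_ne hab.symm,
      erase_insert_of_ne hcd.symm, erase_right_comm, insert_comm]
  all_goals simp [delta, ha, hc, hne, hne.symm, hab, hcd]

lemma delta_mono (h : A ⊆ B) : delta i j A ⊆ delta i j B := by
  by_cases hA : (i, j) ∈ A
  · rw [delta_of_mem hA, delta_of_mem (h hA)]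
    exact insert_subset_insert _ (erase_subset_erase _ h)
  · rw [delta_of_notMem hA]
    by_cases hB : (i, j) ∈ B
    · rw [delta_of_mem hB]
      exact (subset_erase.2 ⟨h, hA⟩).trans (subset_insert _ _)
    · rwa [delta_of_notMem hB]

lemma delta_nonempty (h : A.Nonempty) : (delta i j A).Nonempty := by
  unfold delta
  split_ifs
  · exact insert_nonempty _ _
  · exact h

lemma inter_delta_subset_delta_inter (hA : Set.InjOn Prod.fst (A : Set (ℕ × ℕ))) (hj : j ≠ 1)
    (h : (i, j) ∈ A) : A ∩ delta i j B ⊆ delta i j A ∩ B := by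
  intro q hq
  obtain ⟨hqA, hqB⟩ := mem_inter.1 hq
  have hqi : q ≠ (i, 1) := by
    rintro rfl
    exact hj (congrArg Prod.snd (hA h hqA rfl))
  have hqij : q ≠ (i, j) := by
    rintro rfl
    exact notMem_delta hj hqB
  have hqB' : q ∈ B := by
    unfold delta at hqB
    split_ifs at hqB
    · exact mem_of_mem_erase ((mem_insert.1 hqB).resolve_left hqi)
    · exact hqB
  rw [delta_of_mem h]
  exact mem_inter.2 ⟨mem_insert_of_mem (mem_erase.2 ⟨hqij, hqA⟩), hqB'⟩

lemma delta_inter_eq_erase (hB : Set.InjOn Prod.fst (B : Set (ℕ × ℕ))) (hj : j ≠ 1)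
    (h : (i, j) ∈ A ∩ B) : delta i j A ∩ B = (A ∩ B).erase (i, j) := by
  obtain ⟨hA, hB'⟩ := mem_inter.1 h
  have hi1 : (i, 1) ∉ B := fun hi1 => hj (congrArg Prod.snd (hB hB' hi1 rfl))
  rw [delta_of_mem hA, insert_inter_of_notMem hi1, erase_inter]

lemma delta_mem_labelledFamily {n k : ℕ} (hA : A ∈ labelledFamily n k) :
    delta i j A ∈ labelledFamily n k := by
  by_cases h : (i, j) ∈ A
  · obtain ⟨hsub, -, hinj⟩ := mem_labelledFamily.1 hA
    have hij := mem_product.1 (hsub h)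
    rw [delta_of_mem h, mem_labelledFamily]
    refine ⟨insert_subset ?_ ((erase_subset _ _).trans hsub), insert_nonempty _ _, ?_⟩
    · simp only [mem_product, mem_Icc] at hij ⊢
      omega
    · have hi1 : (i, 1) ∉ A.erase (i, j) := fun hi1 =>
        (mem_erase.1 hi1).1 (hinj (mem_erase.1 hi1).2 h rfl)
      rw [coe_insert, Set.injOn_insert (mod_cast hi1)]
      exact ⟨hinj.mono (by simp), fun ⟨q, hq, hqi⟩ =>
        (mem_erase.1 hq).1 (hinj (mem_erase.1 hq).2 h hqi)⟩
  · rwa [delta_of_notMem h]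

end delta

section Delta

variable {i j : ℕ} {ℱ : Finset (Finset (ℕ × ℕ))}

lemma mem_Delta {B : Finset (ℕ × ℕ)} :
    B ∈ Delta i j ℱ ↔ (∃ A ∈ ℱ, delta i j A = B) ∨ (B ∈ ℱ ∧ delta i j B ∈ ℱ) := by
  simp [Delta]

lemma Delta_subset_labelledFamily {n k : ℕ} (h : ℱ ⊆ labelledFamily n k) :
    Delta i j ℱ ⊆ labelledFamily n k := by
  intro B hB
  rcases mem_Delta.1 hB with ⟨A, hA, rfl⟩ | ⟨hB, -⟩
  · exact delta_mem_labelledFamily (h hA)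
  · exact h hB

lemma intersecting_Delta (hj : j ≠ 1) (hinj : ∀ A ∈ ℱ, Set.InjOn Prod.fst (A : Set (ℕ × ℕ)))
    (hℱ : (ℱ : Set (Finset (ℕ × ℕ))).Intersecting) :
    (Delta i j ℱ : Set (Finset (ℕ × ℕ))).Intersecting := by
  simp only [Set.Intersecting, mem_coe, not_disjoint_iff_nonempty_inter] at hℱ ⊢
  have hmeet : ∀ A ∈ ℱ, ∀ B ∈ ℱ, delta i j B ∈ ℱ → (delta i j A ∩ B).Nonempty := by
    intro A hA B hB hδB
    by_cases h : (i, j) ∈ A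
    · exact (hℱ hA hδB).mono (inter_delta_subset_delta_inter (hinj A hA) hj h)
    · rw [delta_of_notMem h]
      exact hℱ hA hB
  intro A' hA' B' hB'
  rcases mem_Delta.1 hA' with ⟨A, hA, rfl⟩ | ⟨hA, hδA⟩ <;>
    rcases mem_Delta.1 hB' with ⟨B, hB, rfl⟩ | ⟨hB, hδB⟩
  · exact (delta_nonempty (hℱ hA hB)).mono
      (subset_inter (delta_mono inter_subset_left) (delta_mono inter_subset_right))
  · exact hmeet A hA B' hB hδB
  · rw [inter_comm]
    exact hmeet B hB A' hA hδA
  · exact hℱ hA hB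

lemma mapsTo_delta_Delta (hj : j ≠ 1) :
    Set.MapsTo (delta i j) ↑(Delta i j ℱ) ↑(Delta i j ℱ) := by
  intro A hA
  rcases mem_Delta.1 hA with ⟨C, -, rfl⟩ | ⟨hA, -⟩
  · rwa [mem_coe, delta_delta hj]
  · exact mem_Delta.2 (Or.inl ⟨A, hA, rfl⟩)

lemma mapsTo_delta_Delta_of_mapsTo {c d : ℕ} (hj : j ≠ 1) (hd : d ≠ 1)
    (h : Set.MapsTo (delta c d) ↑ℱ ↑ℱ) :
    Set.MapsTo (delta c d) ↑(Delta i j ℱ) ↑(Delta i j ℱ) := by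
  intro A hA
  rcases mem_Delta.1 hA with ⟨C, hC, rfl⟩ | ⟨hA, hδA⟩
  · rw [mem_coe, delta_comm hd hj]
    exact mem_Delta.2 (Or.inl ⟨delta c d C, h hC, rfl⟩)
  · refine mem_Delta.2 (Or.inr ⟨h hA, ?_⟩)
    rw [delta_comm hj hd]
    exact h hδA

end Delta

section foldl

variable {l : List (ℕ × ℕ)} {ℱ : Finset (Finset (ℕ × ℕ))}

lemma foldl_Delta_subset_labelledFamily_and_intersecting {n k : ℕ} (hl : ∀ p ∈ l, p.2 ≠ 1)
    (hsub : ℱ ⊆ labelledFamily n k) (hℱ : (ℱ : Set (Finset (ℕ × ℕ))).Intersecting) :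
    l.foldl (fun ℱ p => Delta p.1 p.2 ℱ) ℱ ⊆ labelledFamily n k ∧
      (↑(l.foldl (fun ℱ p => Delta p.1 p.2 ℱ) ℱ) : Set (Finset (ℕ × ℕ))).Intersecting := by
  induction l generalizing ℱ with
  | nil => exact ⟨hsub, hℱ⟩
  | cons p l ih =>
    refine ih (fun q hq => hl q (List.mem_cons_of_mem p hq)) (Delta_subset_labelledFamily hsub)
      (intersecting_Delta (hl p List.mem_cons_self)
        (fun A hA => (mem_labelledFamily.1 (hsub hA)).2.2) hℱ)

lemma mapsTo_delta_foldl_Delta {c d : ℕ} (hl : ∀ p ∈ l, p.2 ≠ 1) (hd : d ≠ 1)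
    (h : Set.MapsTo (delta c d) ↑ℱ ↑ℱ) :
    Set.MapsTo (delta c d) ↑(l.foldl (fun ℱ p => Delta p.1 p.2 ℱ) ℱ)
      ↑(l.foldl (fun ℱ p => Delta p.1 p.2 ℱ) ℱ) := by
  induction l generalizing ℱ with
  | nil => exact h
  | cons p l ih =>
    exact ih (fun q hq => hl q (List.mem_cons_of_mem p hq))
      (mapsTo_delta_Delta_of_mapsTo (hl p List.mem_cons_self) hd h)

lemma mapsTo_delta_foldl_Delta_of_mem {q : ℕ × ℕ} (hl : ∀ p ∈ l, p.2 ≠ 1) (hq : q ∈ l) :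
    Set.MapsTo (delta q.1 q.2) ↑(l.foldl (fun ℱ p => Delta p.1 p.2 ℱ) ℱ)
      ↑(l.foldl (fun ℱ p => Delta p.1 p.2 ℱ) ℱ) := by
  induction l generalizing ℱ with
  | nil => simp at hq
  | cons p l ih =>
    have hl' : ∀ p ∈ l, p.2 ≠ 1 := fun q hq => hl q (List.mem_cons_of_mem p hq)
    rw [List.foldl_cons]
    rcases List.mem_cons.1 hq with rfl | hq
    · exact mapsTo_delta_foldl_Delta hl' (hl q List.mem_cons_self)
        (mapsTo_delta_Delta (hl q List.mem_cons_self))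
    · exact ih hl' hq

end foldl

lemma mem_compressionOrder {n k : ℕ} {p : ℕ × ℕ} :
    p ∈ compressionOrder n k ↔ p ∈ Icc 1 n ×ˢ Icc 2 k := by
  obtain ⟨i, j⟩ := p
  simp only [compressionOrder, List.mem_flatMap, List.mem_map, List.mem_range, Prod.mk.injEq,
    mem_product, mem_Icc]
  constructor
  · rintro ⟨a, ha, b, hb, rfl, rfl⟩
    omega
  · rintro ⟨⟨h1, h2⟩, h3, h4⟩
    exact ⟨i - 1, by omega, j - 2, by omega, by omega, by omega⟩

lemma exists_mem_inter_snd_eq_one {ℱ : Finset (Finset (ℕ × ℕ))}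
    (hℱ : (ℱ : Set (Finset (ℕ × ℕ))).Intersecting)
    (hcl : ∀ A ∈ ℱ, ∀ p ∈ A, p.2 ≠ 1 → delta p.1 p.2 A ∈ ℱ) {A B : Finset (ℕ × ℕ)}
    (hA : A ∈ ℱ) (hB : B ∈ ℱ) (hBinj : Set.InjOn Prod.fst (B : Set (ℕ × ℕ))) :
    ∃ x ∈ A ∩ B, x.2 = 1 := by
  obtain ⟨A', hA', hmin⟩ := (ℱ.filter (· ∩ B ⊆ A ∩ B)).exists_min_image (fun A' => #(A' ∩ B))
    ⟨A, mem_filter.2 ⟨hA, subset_rfl⟩⟩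
  obtain ⟨hA'ℱ, hA'sub⟩ := mem_filter.1 hA'
  obtain ⟨x, hx⟩ := not_disjoint_iff_nonempty_inter.1 (hℱ hA'ℱ hB)
  refine ⟨x, hA'sub hx, ?_⟩
  by_contra hx1
  have hδ := delta_inter_eq_erase hBinj hx1 hx
  have hle := hmin (delta x.1 x.2 A') (mem_filter.2
    ⟨hcl A' hA'ℱ x (mem_inter.1 hx).1 hx1, hδ ▸ (erase_subset _ _).trans hA'sub⟩)
  rw [hδ, card_erase_of_mem hx] at hle
  have := card_pos.2 ⟨x, hx⟩
  omega

theorem compressed_family_intersects_on_first_level_general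
    (n k : ℕ)
    (𝒜 : Finset (Finset (ℕ × ℕ)))
    (h𝒜 : 𝒜 ⊆ labelledFamily n k)
    (hint : ∀ A ∈ 𝒜, ∀ B ∈ 𝒜, (A ∩ B).Nonempty) :
    ∀ A ∈ (compressionOrder n k).foldl (fun ℱ p => Delta p.1 p.2 ℱ) 𝒜,
      ∀ B ∈ (compressionOrder n k).foldl (fun ℱ p => Delta p.1 p.2 ℱ) 𝒜,
        (A ∩ B ∩ ((Finset.Icc 1 n) ×ˢ ({1} : Finset ℕ))).Nonempty := by
  set 𝒜' := (compressionOrder n k).foldl (fun ℱ p => Delta p.1 p.2 ℱ) 𝒜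
  have hord : ∀ p ∈ compressionOrder n k, p.2 ≠ 1 := fun p hp => by
    have := (mem_product.1 (mem_compressionOrder.1 hp)).2
    simp only [mem_Icc] at this
    omega
  obtain ⟨hsub, h𝒜'⟩ := foldl_Delta_subset_labelledFamily_and_intersecting hord h𝒜
    fun A hA B hB => not_disjoint_iff_nonempty_inter.2 (hint A hA B hB)
  have hcl : ∀ C ∈ 𝒜', ∀ p ∈ C, p.2 ≠ 1 → delta p.1 p.2 C ∈ 𝒜' := by
    intro C hC p hp hp1
    have hpC := mem_product.1 ((mem_labelledFamily.1 (hsub hC)).1 hp)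
    refine mapsTo_delta_foldl_Delta_of_mem hord (mem_compressionOrder.2 ?_) hC
    simp only [mem_product, mem_Icc] at hpC ⊢
    omega
  intro A hA B hB
  obtain ⟨x, hx, hx1⟩ := exists_mem_inter_snd_eq_one h𝒜' hcl hA hB
    (mem_labelledFamily.1 (hsub hB)).2.2
  have hxA := mem_product.1 ((mem_labelledFamily.1 (hsub hA)).1 (mem_inter.1 hx).1)
  exact ⟨x, mem_inter.2 ⟨hx, mem_product.2 ⟨hxA.1, mem_singleton.2 hx1⟩⟩⟩

/-- **Lemma (special case of Borg, Corollary 3.2).** If `𝒜` is an intersecting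
subfamily of `ℒ_{n,k}` and `𝒜* = Δ_{n,k} ∘ ⋯ ∘ Δ_{n,2} ∘ ⋯ ∘ Δ_{1,k} ∘ ⋯ ∘
Δ_{1,2}(𝒜)`, then `A ∩ B ∩ ([n] × {1}) ≠ ∅` for any `A, B ∈ 𝒜*`. -/
theorem compressed_family_intersects_on_first_level
    (n k : ℕ) (hn : 1 ≤ n) (hk : 2 ≤ k)
    (𝒜 : Finset (Finset (ℕ × ℕ)))
    (h𝒜 : 𝒜 ⊆ labelledFamily n k)
    (hint : ∀ A ∈ 𝒜, ∀ B ∈ 𝒜, (A ∩ B).Nonempty) :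
    ∀ A ∈ (compressionOrder n k).foldl (fun ℱ p => Delta p.1 p.2 ℱ) 𝒜,
      ∀ B ∈ (compressionOrder n k).foldl (fun ℱ p => Delta p.1 p.2 ℱ) 𝒜,
        (A ∩ B ∩ ((Finset.Icc 1 n) ×ˢ ({1} : Finset ℕ))).Nonempty :=
  compressed_family_intersects_on_first_level_general n k 𝒜 h𝒜 hint
end

section
/- Let n be a positive integer and let r be an integer with 1 ≤ r ≤ n/2. Let 𝒜 and ℬ be cross-intersecting families of subsets of [n] with 𝒜 intersecting. Then the number of sets in 𝒜 of size n − r is at most C(n, r) − |{S : S ∈ 𝒜 ∪ ℬ, |S| = r}|, where C(n, r) denotes the binomial coefficient n choose r. -/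
/-- If `1 ≤ r ≤ n/2`, `𝒜` and `ℬ` are cross-intersecting families of subsets of
`[n]`, and `𝒜` is intersecting, then
`|𝒜^{(n-r)}| ≤ C(n,r) - |(𝒜 ∪ ℬ)^{(r)}|`, stated equivalently in subtraction-free
form as `|𝒜^{(n-r)}| + |(𝒜 ∪ ℬ)^{(r)}| ≤ C(n,r)`. -/
theorem level_count_of_intersecting_cross_intersecting
    (n r : ℕ) (hr : 1 ≤ r) (hrn : 2 * r ≤ n)
    (𝒜 ℬ : Finset (Finset ℕ))
    (h𝒜sub : ∀ A ∈ 𝒜, A ⊆ Finset.Icc 1 n)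
    (hℬsub : ∀ B ∈ ℬ, B ⊆ Finset.Icc 1 n)
    (hcross : ∀ A ∈ 𝒜, ∀ B ∈ ℬ, (A ∩ B).Nonempty)
    (hint : ∀ A ∈ 𝒜, ∀ A' ∈ 𝒜, (A ∩ A').Nonempty) :
    (𝒜.filter (fun A => A.card = n - r)).card
        + ((𝒜 ∪ ℬ).filter (fun S => S.card = r)).card ≤ n.choose r := by
  set I := Finset.Icc 1 n with hI
  have hIcard : I.card = n := by simp [hI]
  set C := (𝒜.filter (fun A => A.card = n - r)).image (fun A => I \ A) with hC
  set D := (𝒜 ∪ ℬ).filter (fun S => S.card = r) with hD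
  have hrn' : r ≤ n := le_trans (by omega) hrn
  -- image is injective
  have hcard : C.card = (𝒜.filter (fun A => A.card = n - r)).card := by
    apply Finset.card_image_of_injOn
    intro A hA A' hA' h
    simp only [Finset.mem_coe, Finset.mem_filter] at hA hA'
    have sA := h𝒜sub A hA.1
    have sA' := h𝒜sub A' hA'.1
    have h2 : I \ (I \ A) = I \ (I \ A') := by simp only at h; rw [h]
    rwa [sdiff_sdiff_eq_self sA, sdiff_sdiff_eq_self sA'] at h2
  have hdisj : Disjoint C D := by
    rw [Finset.disjoint_left]
    intro S hS hSD
    simp only [hC, Finset.mem_image, Finset.mem_filter] at hS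
    obtain ⟨A, ⟨hA𝒜, hAcard⟩, rfl⟩ := hS
    simp only [hD, Finset.mem_filter, Finset.mem_union] at hSD
    have hne : ((I \ A) ∩ A).Nonempty := by
      rcases hSD.1 with h | h
      · exact hint _ h _ hA𝒜
      · obtain ⟨x, hx⟩ := hcross _ hA𝒜 _ h
        rw [Finset.mem_inter] at hx
        exact ⟨x, Finset.mem_inter.mpr ⟨hx.2, hx.1⟩⟩
    obtain ⟨x, hx⟩ := hne
    simp only [Finset.mem_inter, Finset.mem_sdiff] at hx
    exact hx.1.2 hx.2
  have hCsub : C ⊆ I.powersetCard r := by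
    intro S hS
    simp only [hC, Finset.mem_image, Finset.mem_filter] at hS
    obtain ⟨A, ⟨hA𝒜, hAcard⟩, rfl⟩ := hS
    rw [Finset.mem_powersetCard]
    refine ⟨Finset.sdiff_subset, ?_⟩
    rw [Finset.card_sdiff_of_subset (h𝒜sub A hA𝒜), hAcard, hIcard]
    omega
  have hDsub : D ⊆ I.powersetCard r := by
    intro S hS
    simp only [hD, Finset.mem_filter, Finset.mem_union] at hS
    rw [Finset.mem_powersetCard]
    exact ⟨hS.1.elim (fun h => h𝒜sub _ h) (fun h => hℬsub _ h), hS.2⟩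
  calc (𝒜.filter (fun A => A.card = n - r)).card + D.card
      = C.card + D.card := by rw [hcard]
    _ = (C ∪ D).card := (Finset.card_union_of_disjoint hdisj).symm
    _ ≤ (I.powersetCard r).card := Finset.card_le_card (Finset.union_subset hCsub hDsub)
    _ = n.choose r := by rw [Finset.card_powersetCard, hIcard]
end

section
/- Let n be a positive integer and let r be an integer with 1 ≤ r ≤ n/2. Let 𝒜 and ℬ be cross-intersecting families of subsets of [n] with 𝒜 intersecting. Let a_r, b_r, a_{n-r}, b_{n-r} be non-negative real numbers satisfying a_r + b_r ≥ a_{n-r} + b_{n-r} and a_{n-r} ≥ b_r. Then |𝒜^{(r)}| a_r + |ℬ^{(r)}| b_r + |𝒜^{(n-r)}| a_{n-r} + |ℬ^{(n-r)}| b_{n-r} ≤ C(n−1, r−1)(a_r + b_r) + C(n−1, n−r−1)(a_{n-r} + b_{n-r}), where C(m, k) denotes the binomial coefficient m choose k and ℱ^{(i)} denotes the subfamily of sets in ℱ of size exactly i. -/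
open Finset

/-- EKR transferred to subsets of `Icc 1 n`. -/
lemma ekr_nat (n r : ℕ) (hr : 1 ≤ r) (hrn : 2 * r ≤ n) (𝒞 : Finset (Finset ℕ))
    (hsub : ∀ A ∈ 𝒞, A ⊆ Finset.Icc 1 n) (hcard : ∀ A ∈ 𝒞, A.card = r)
    (hint : ∀ A ∈ 𝒞, ∀ A' ∈ 𝒞, (A ∩ A').Nonempty) :
    𝒞.card ≤ (n - 1).choose (r - 1) := by
  classical
  set g : Fin n → ℕ := fun i => (i : ℕ) + 1 with hg
  have hginj : Function.Injective g := by
    intro a b hab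
    simpa [hg, Fin.ext_iff] using hab
  have hrange : ∀ x, x ∈ Finset.Icc 1 n → x ∈ Set.range g := by
    intro x hx
    rw [Finset.mem_Icc] at hx
    exact ⟨⟨x - 1, by omega⟩, by simp [hg]; omega⟩
  have himg : ∀ A ∈ 𝒞, (A.preimage g hginj.injOn).image g = A := by
    intro A hA
    rw [Finset.image_preimage]
    exact Finset.filter_true_of_mem fun x hx => hrange x (hsub A hA hx)
  set F : Finset (Finset (Fin n)) := 𝒞.image (fun A => A.preimage g hginj.injOn) with hF
  have hcardF : F.card = 𝒞.card := by
    apply Finset.card_image_of_injOn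
    intro A hA B hB hAB
    dsimp only at hAB
    rw [← himg A hA, ← himg B hB, hAB]
  have hsized : (F : Set (Finset (Fin n))).Sized r := by
    intro X hX
    simp only [hF, Finset.coe_image, Set.mem_image, Finset.mem_coe] at hX
    obtain ⟨A, hA, rfl⟩ := hX
    have := Finset.card_image_of_injOn (hginj.injOn.mono (Set.subset_univ _)) (s := A.preimage g hginj.injOn)
    rw [himg A hA] at this
    rw [← this, hcard A hA]
  have hintF : (F : Set (Finset (Fin n))).Intersecting := by
    intro X hX Y hY hdisj
    simp only [hF, Finset.coe_image, Set.mem_image, Finset.mem_coe] at hX hY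
    obtain ⟨A, hA, rfl⟩ := hX
    obtain ⟨B, hB, rfl⟩ := hY
    obtain ⟨x, hx⟩ := hint A hA B hB
    rw [Finset.mem_inter] at hx
    obtain ⟨i, rfl⟩ := hrange x (hsub A hA hx.1)
    exact Finset.disjoint_left.mp hdisj (Finset.mem_preimage.mpr hx.1) (Finset.mem_preimage.mpr hx.2)
  have := Finset.erdos_ko_rado hintF hsized (by omega : r ≤ n / 2)
  rwa [hcardF] at this

/-- Cross-intersecting families at levels `r` and `n-r` satisfy `|𝒞|+|𝒟| ≤ C(n,r)`. -/
lemma cross_bound (n r : ℕ) (hrn : r ≤ n) (𝒞 𝒟 : Finset (Finset ℕ))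
    (hCsub : ∀ A ∈ 𝒞, A ⊆ Finset.Icc 1 n) (hDsub : ∀ B ∈ 𝒟, B ⊆ Finset.Icc 1 n)
    (hCcard : ∀ A ∈ 𝒞, A.card = r) (hDcard : ∀ B ∈ 𝒟, B.card = n - r)
    (hcross : ∀ A ∈ 𝒞, ∀ B ∈ 𝒟, (A ∩ B).Nonempty) :
    𝒞.card + 𝒟.card ≤ n.choose r := by
  classical
  set I := Finset.Icc 1 n with hI
  have hIcard : I.card = n := by simp [hI]
  set 𝒟' : Finset (Finset ℕ) := 𝒟.image (fun B => I \ B) with hD'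
  have hinjD : Set.InjOn (fun B => I \ B) 𝒟 := by
    intro A hA B hB hAB
    dsimp only at hAB
    have : I \ (I \ A) = I \ (I \ B) := by rw [hAB]
    rwa [Finset.sdiff_sdiff_eq_self (hDsub A hA), Finset.sdiff_sdiff_eq_self (hDsub B hB)] at this
  have hcardD' : 𝒟'.card = 𝒟.card := Finset.card_image_of_injOn hinjD
  have hdisj : Disjoint 𝒞 𝒟' := by
    rw [Finset.disjoint_left]
    intro X hX hX'
    simp only [hD', Finset.mem_image] at hX'
    obtain ⟨B, hB, rfl⟩ := hX'
    obtain ⟨x, hx⟩ := hcross _ hX B hB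
    rw [Finset.mem_inter, Finset.mem_sdiff] at hx
    exact hx.1.2 hx.2
  have hsub : 𝒞 ∪ 𝒟' ⊆ Finset.powersetCard r I := by
    intro X hX
    rw [Finset.mem_union] at hX
    rw [Finset.mem_powersetCard]
    rcases hX with hX | hX
    · exact ⟨hCsub X hX, hCcard X hX⟩
    · simp only [hD', Finset.mem_image] at hX
      obtain ⟨B, hB, rfl⟩ := hX
      refine ⟨Finset.sdiff_subset, ?_⟩
      rw [Finset.card_sdiff_of_subset (hDsub B hB), hIcard, hDcard B hB]
      omega
  calc 𝒞.card + 𝒟.card = (𝒞 ∪ 𝒟').card := by rw [Finset.card_union_of_disjoint hdisj, hcardD']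
    _ ≤ (Finset.powersetCard r I).card := Finset.card_le_card hsub
    _ = n.choose r := by rw [Finset.card_powersetCard, hIcard]

/-- If `1 ≤ r ≤ n/2`, `𝒜` and `ℬ` are cross-intersecting families of subsets of
`[n]` with `𝒜` intersecting, and `aᵣ, bᵣ, a_{n-r}, b_{n-r}` are non-negative
reals with `aᵣ + bᵣ ≥ a_{n-r} + b_{n-r}` and `a_{n-r} ≥ bᵣ`, then
`|𝒜^{(r)}|aᵣ + |ℬ^{(r)}|bᵣ + |𝒜^{(n-r)}|a_{n-r} + |ℬ^{(n-r)}|b_{n-r}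
  ≤ C(n-1, r-1)(aᵣ + bᵣ) + C(n-1, n-r-1)(a_{n-r} + b_{n-r})`. -/
theorem weighted_two_level_bound
    (n r : ℕ) (hr : 1 ≤ r) (hrn : 2 * r ≤ n)
    (𝒜 ℬ : Finset (Finset ℕ))
    (h𝒜sub : ∀ A ∈ 𝒜, A ⊆ Finset.Icc 1 n)
    (hℬsub : ∀ B ∈ ℬ, B ⊆ Finset.Icc 1 n)
    (hcross : ∀ A ∈ 𝒜, ∀ B ∈ ℬ, (A ∩ B).Nonempty)
    (hint : ∀ A ∈ 𝒜, ∀ A' ∈ 𝒜, (A ∩ A').Nonempty)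
    (ar br anr bnr : ℝ)
    (har : 0 ≤ ar) (hbr : 0 ≤ br) (hanr : 0 ≤ anr) (hbnr : 0 ≤ bnr)
    (hsum : anr + bnr ≤ ar + br) (hba : br ≤ anr) :
    ((𝒜.filter (fun A => A.card = r)).card : ℝ) * ar
        + ((ℬ.filter (fun B => B.card = r)).card : ℝ) * br
        + ((𝒜.filter (fun A => A.card = n - r)).card : ℝ) * anr
        + ((ℬ.filter (fun B => B.card = n - r)).card : ℝ) * bnr
      ≤ ((n - 1).choose (r - 1) : ℝ) * (ar + br)
          + ((n - 1).choose (n - r - 1) : ℝ) * (anr + bnr) := by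
  classical
  have hrn' : r ≤ n := by omega
  set Ar := 𝒜.filter (fun A => A.card = r) with hAr
  set Br := ℬ.filter (fun B => B.card = r) with hBr
  set An := 𝒜.filter (fun A => A.card = n - r) with hAn
  set Bn := ℬ.filter (fun B => B.card = n - r) with hBn
  -- EKR bound
  have h1 : Ar.card ≤ (n - 1).choose (r - 1) := by
    apply ekr_nat n r hr hrn
    · intro A hA; exact h𝒜sub A (Finset.mem_filter.mp hA).1
    · intro A hA; exact (Finset.mem_filter.mp hA).2
    · intro A hA A' hA'
      exact hint A (Finset.mem_filter.mp hA).1 A' (Finset.mem_filter.mp hA').1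
  have h2 : Ar.card + Bn.card ≤ n.choose r := by
    apply cross_bound n r hrn'
    · intro A hA; exact h𝒜sub A (Finset.mem_filter.mp hA).1
    · intro B hB; exact hℬsub B (Finset.mem_filter.mp hB).1
    · intro A hA; exact (Finset.mem_filter.mp hA).2
    · intro B hB; exact (Finset.mem_filter.mp hB).2
    · intro A hA B hB
      exact hcross A (Finset.mem_filter.mp hA).1 B (Finset.mem_filter.mp hB).1
  have h3 : Br.card + An.card ≤ n.choose r := by
    apply cross_bound n r hrn'
    · intro B hB; exact hℬsub B (Finset.mem_filter.mp hB).1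
    · intro A hA; exact h𝒜sub A (Finset.mem_filter.mp hA).1
    · intro B hB; exact (Finset.mem_filter.mp hB).2
    · intro A hA; exact (Finset.mem_filter.mp hA).2
    · intro B hB A hA
      rw [Finset.inter_comm]
      exact hcross A (Finset.mem_filter.mp hA).1 B (Finset.mem_filter.mp hB).1
  have h4 : Ar.card + An.card ≤ n.choose r := by
    apply cross_bound n r hrn'
    · intro A hA; exact h𝒜sub A (Finset.mem_filter.mp hA).1
    · intro A hA; exact h𝒜sub A (Finset.mem_filter.mp hA).1
    · intro A hA; exact (Finset.mem_filter.mp hA).2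
    · intro A hA; exact (Finset.mem_filter.mp hA).2
    · intro A hA A' hA'
      exact hint A (Finset.mem_filter.mp hA).1 A' (Finset.mem_filter.mp hA').1
  -- binomial identities
  have hpascal : n.choose r = (n - 1).choose (r - 1) + (n - 1).choose r := by
    obtain ⟨m, rfl⟩ : ∃ m, n = m + 1 := ⟨n - 1, by omega⟩
    obtain ⟨s, rfl⟩ : ∃ s, r = s + 1 := ⟨r - 1, by omega⟩
    simp [Nat.choose_succ_succ, Nat.add_comm]
  have hsymm : (n - 1).choose (n - r - 1) = (n - 1).choose r := by
    have : n - r - 1 = (n - 1) - r := by omega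
    rw [this, Nat.choose_symm (by omega : r ≤ n - 1)]
  -- arithmetic finish
  have hx : (Ar.card : ℝ) ≤ ((n - 1).choose (r - 1) : ℝ) := by exact_mod_cast h1
  have h2' : (Ar.card : ℝ) + (Bn.card : ℝ) ≤ (n.choose r : ℝ) := by exact_mod_cast h2
  have h3' : (Br.card : ℝ) + (An.card : ℝ) ≤ (n.choose r : ℝ) := by exact_mod_cast h3
  have h4' : (Ar.card : ℝ) + (An.card : ℝ) ≤ (n.choose r : ℝ) := by exact_mod_cast h4
  have hKMN : (n.choose r : ℝ) = ((n - 1).choose (r - 1) : ℝ) + ((n - 1).choose r : ℝ) := by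
    exact_mod_cast congrArg (Nat.cast : ℕ → ℝ) hpascal
  rw [hsymm]
  set K : ℝ := ((n - 1).choose (r - 1) : ℝ)
  set M : ℝ := ((n - 1).choose r : ℝ)
  set N : ℝ := (n.choose r : ℝ)
  show (Ar.card : ℝ) * ar + (Br.card : ℝ) * br + (An.card : ℝ) * anr + (Bn.card : ℝ) * bnr
      ≤ K * (ar + br) + M * (anr + bnr)
  nlinarith [mul_nonneg (by linarith : (0:ℝ) ≤ ar + br - anr - bnr) (by linarith : (0:ℝ) ≤ K - Ar.card),
    mul_nonneg hbnr (by linarith : (0:ℝ) ≤ N - Ar.card - Bn.card),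
    mul_nonneg hbr (by linarith : (0:ℝ) ≤ N - Br.card - An.card),
    mul_nonneg (by linarith : (0:ℝ) ≤ anr - br) (by linarith : (0:ℝ) ≤ N - Ar.card - An.card)]
end

section
/- Let n be an even positive integer. Let 𝒜 and ℬ be cross-intersecting families of subsets of [n] with 𝒜 intersecting, and let a and b be real numbers with a ≥ b ≥ 0. Then a·|𝒜^{(n/2)}| + b·|ℬ^{(n/2)}| ≤ (a + b)·C(n−1, n/2 − 1), where C(m, k) denotes the binomial coefficient m choose k and ℱ^{(i)} denotes the subfamily of sets in ℱ of size exactly i. -/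
/-!
Complementation inside `[n]` maps the `n/2`-sets of `𝒜` injectively to `n/2`-sets that meet no
member of `𝒜` or `ℬ`. Hence, writing `x = |𝒜^{(n/2)}|` and `y = |ℬ^{(n/2)}|`, both `2x` and `x + y`
are at most `C(n, n/2) = 2·C(n-1, n/2-1)`, and `a·x + b·y = (a - b)·x + b·(x + y)`.
-/

open Finset

namespace Finset

variable {α : Type*}

theorem filter_card_eq_subset_powersetCard {𝒜 : Finset (Finset α)} {U : Finset α}
    (h𝒜 : ∀ A ∈ 𝒜, A ⊆ U) (k : ℕ) : 𝒜.filter (fun A => #A = k) ⊆ U.powersetCard k :=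
  fun A hA => mem_powersetCard.2 ⟨h𝒜 A (mem_filter.1 hA).1, (mem_filter.1 hA).2⟩

theorem card_add_card_le_choose_of_forall_inter_nonempty [DecidableEq α] {U : Finset α} {k l : ℕ}
    {𝒜 ℬ : Finset (Finset α)} (h𝒜 : 𝒜 ⊆ U.powersetCard k) (hℬ : ℬ ⊆ U.powersetCard l)
    (hkl : k + l = #U) (hcross : ∀ A ∈ 𝒜, ∀ B ∈ ℬ, (A ∩ B).Nonempty) :
    #𝒜 + #ℬ ≤ (#U).choose k := by
  have hsub : ∀ A ∈ 𝒜, A ⊆ U ∧ #A = k := fun A hA => mem_powersetCard.1 (h𝒜 hA)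
  have hcompl : 𝒜.image (U \ ·) ⊆ U.powersetCard l := by
    simp only [subset_iff, mem_image, mem_powersetCard]
    rintro _ ⟨A, hA, rfl⟩
    refine ⟨sdiff_subset, ?_⟩
    rw [card_sdiff_of_subset (hsub A hA).1, (hsub A hA).2]
    omega
  have hinj : Set.InjOn (U \ ·) 𝒜 := fun A hA A' hA' hAA' => by
    rw [← sdiff_sdiff_eq_self (hsub A hA).1, ← sdiff_sdiff_eq_self (hsub A' hA').1]
    exact congrArg (U \ ·) hAA'
  have hdisj : Disjoint (𝒜.image (U \ ·)) ℬ := by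
    simp only [disjoint_left, mem_image]
    rintro _ ⟨A, hA, rfl⟩ hB
    obtain ⟨x, hx⟩ := hcross A hA _ hB
    exact (mem_sdiff.1 (mem_inter.1 hx).2).2 (mem_inter.1 hx).1
  calc #𝒜 + #ℬ = #(𝒜.image (U \ ·) ∪ ℬ) := by
        rw [card_union_of_disjoint hdisj, card_image_of_injOn hinj]
    _ ≤ #(U.powersetCard l) := card_le_card (union_subset hcompl hℬ)
    _ = (#U).choose k := by rw [card_powersetCard, ← hkl, Nat.choose_symm_add]

end Finset

theorem Nat.choose_two_mul_self {k : ℕ} (hk : 0 < k) :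
    (2 * k).choose k = 2 * (2 * k - 1).choose (k - 1) := by
  obtain ⟨j, rfl⟩ : ∃ j, k = j + 1 := ⟨k - 1, by omega⟩
  rw [show 2 * (j + 1) = 2 * j + 1 + 1 by ring, Nat.choose_succ_succ', Nat.choose_symm_half]
  simp only [Nat.add_sub_cancel, two_mul]

/-- If `n` is an even positive integer, `𝒜` and `ℬ` are cross-intersecting
families of subsets of `[n]` with `𝒜` intersecting, and `a ≥ b ≥ 0` are reals,
then `a·|𝒜^{(n/2)}| + b·|ℬ^{(n/2)}| ≤ (a + b)·C(n-1, n/2 - 1)`. -/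
theorem middle_level_weighted_bound
    (n : ℕ) (hn : 0 < n) (hev : Even n)
    (𝒜 ℬ : Finset (Finset ℕ))
    (h𝒜sub : ∀ A ∈ 𝒜, A ⊆ Finset.Icc 1 n)
    (hℬsub : ∀ B ∈ ℬ, B ⊆ Finset.Icc 1 n)
    (hcross : ∀ A ∈ 𝒜, ∀ B ∈ ℬ, (A ∩ B).Nonempty)
    (hint : ∀ A ∈ 𝒜, ∀ A' ∈ 𝒜, (A ∩ A').Nonempty)
    (a b : ℝ) (hb : 0 ≤ b) (hab : b ≤ a) :
    a * ((𝒜.filter (fun A => A.card = n / 2)).card : ℝ)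
        + b * ((ℬ.filter (fun B => B.card = n / 2)).card : ℝ)
      ≤ (a + b) * ((n - 1).choose (n / 2 - 1) : ℝ) := by
  obtain ⟨k, rfl⟩ := hev.two_dvd
  rw [Nat.mul_div_cancel_left k two_pos]
  have hU : k + k = #(Icc 1 (2 * k)) := by rw [Nat.card_Icc]; omega
  have hC : (#(Icc 1 (2 * k))).choose k = 2 * (2 * k - 1).choose (k - 1) := by
    rw [← hU, ← two_mul]
    exact Nat.choose_two_mul_self (by omega)
  have h𝒜 := filter_card_eq_subset_powersetCard h𝒜sub k
  have hℬ := filter_card_eq_subset_powersetCard hℬsub k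
  have hAA := card_add_card_le_choose_of_forall_inter_nonempty h𝒜 h𝒜 hU
    fun A hA A' hA' => hint A (mem_filter.1 hA).1 A' (mem_filter.1 hA').1
  have hAB := card_add_card_le_choose_of_forall_inter_nonempty h𝒜 hℬ hU
    fun A hA B hB => hcross A (mem_filter.1 hA).1 B (mem_filter.1 hB).1
  rw [hC] at hAA hAB
  rw [← two_mul] at hAA
  have hx : (#(𝒜.filter (fun A => #A = k)) : ℝ) ≤ (2 * k - 1).choose (k - 1) := by
    exact_mod_cast Nat.le_of_mul_le_mul_left hAA two_pos
  have hxy : (#(𝒜.filter (fun A => #A = k)) : ℝ) + #(ℬ.filter (fun B => #B = k))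
      ≤ 2 * (2 * k - 1).choose (k - 1) := by
    exact_mod_cast hAB
  linarith [mul_le_mul_of_nonneg_left hx (sub_nonneg.2 hab), mul_le_mul_of_nonneg_left hxy hb]
end
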